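/- arXiv:1309.4969 — 8 statements merged into one kernel-verified Lean document; each statement's English description precedes it below -/
import Mathlib

section
/- Let c, d, e, f be nonnegative integers with c > 0 and d > 0. Let m be the unique integer with 0 ≤ m < c + d and d·f + e ≡ m (mod c + d), and set L = max{ c(d·f + e − m)/(c + d), c(d·f + e − m)/(c + d) + m − d } (note that c(d·f + e − m)/(c + d) is a nonnegative integer). Then L is the largest nonnegative integer ℓ satisfying ⌈ℓ/c⌉ + ⌈(ℓ − e)/d⌉ ≤ f; that is, L itself satisfies this inequality, and every nonnegative integer ℓ satisfying it has ℓ ≤ L. -/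
lemma ceil_div_le_iff' (a u : ℤ) (b : ℕ) (hb : 0 < b) :
    ⌈(a : ℚ) / (b : ℚ)⌉ ≤ u ↔ a ≤ u * b := by
  have hbQ : (0 : ℚ) < b := by exact_mod_cast hb
  rw [Int.ceil_le, div_le_iff₀ hbQ]
  exact_mod_cast Iff.rfl

/-- Lemma 2.1 of Jayne–Misra: the largest nonnegative integer `ℓ` satisfying
`⌈ℓ/c⌉ + ⌈(ℓ-e)/d⌉ ≤ f` is `max (c(df+e-m)/(c+d)) (c(df+e-m)/(c+d) + m - d)`,
where `m` is the residue of `df+e` modulo `c+d`. -/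
theorem stmt_0 (c d e f : ℕ) (hc : 0 < c) (hd : 0 < d)
    (m : ℤ) (hm0 : 0 ≤ m) (hm1 : m < (c : ℤ) + d)
    (hmod : ((d : ℤ) * f + e) % ((c : ℤ) + d) = m)
    (L : ℤ)
    (hL : L = max (((c : ℤ) * ((d : ℤ) * f + e - m)) / ((c : ℤ) + d))
               (((c : ℤ) * ((d : ℤ) * f + e - m)) / ((c : ℤ) + d) + m - d)) :
    (0 ≤ L ∧ ⌈(L : ℚ) / (c : ℚ)⌉ + ⌈((L : ℚ) - (e : ℚ)) / (d : ℚ)⌉ ≤ (f : ℤ)) ∧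
    ∀ ℓ : ℤ, 0 ≤ ℓ →
      ⌈(ℓ : ℚ) / (c : ℚ)⌉ + ⌈((ℓ : ℚ) - (e : ℚ)) / (d : ℚ)⌉ ≤ (f : ℤ) → ℓ ≤ L := by
  set n : ℤ := (c : ℤ) + d with hn
  have hn0 : 0 < n := by positivity
  set s : ℤ := (d : ℤ) * f + e with hs
  have hs0 : 0 ≤ s := by positivity
  set q : ℤ := s / n with hqdef
  have hq : s = n * q + m := by
    rw [← hmod]; exact (Int.mul_ediv_add_emod s n).symm
  have hq0 : 0 ≤ q := Int.ediv_nonneg hs0 hn0.le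
  have hA : (c : ℤ) * (s - m) / n = (c : ℤ) * q := by
    have h1 : s - m = n * q := by omega
    rw [h1, show (c : ℤ) * (n * q) = ((c : ℤ) * q) * n by ring,
      Int.mul_ediv_cancel _ hn0.ne']
  rw [hA] at hL
  -- key: s = c*q + d*q + m
  have hkey : s = (c : ℤ) * q + (d : ℤ) * q + m := by
    rw [hq, hn]; ring
  have hcq : (0 : ℤ) ≤ (c : ℤ) * q := by positivity
  -- sufficient criterion for the inequality
  have hP : ∀ ℓ u : ℤ, ℓ ≤ u * c → ℓ - e ≤ (f - u) * d →
      ⌈(ℓ : ℚ) / (c : ℚ)⌉ + ⌈((ℓ : ℚ) - (e : ℚ)) / (d : ℚ)⌉ ≤ (f : ℤ) := by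
    intro ℓ u h1 h2
    have hu1 : ⌈(ℓ : ℚ) / (c : ℚ)⌉ ≤ u := (ceil_div_le_iff' ℓ u c hc).mpr h1
    have hu2 : ⌈((ℓ - e : ℤ) : ℚ) / (d : ℚ)⌉ ≤ f - u :=
      (ceil_div_le_iff' (ℓ - e) (f - u) d hd).mpr h2
    have hcast : ((ℓ - e : ℤ) : ℚ) = (ℓ : ℚ) - (e : ℚ) := by push_cast; ring
    rw [hcast] at hu2
    omega
  constructor
  · constructor
    · rw [hL]; exact le_trans hcq (le_max_left _ _)
    · rcases le_or_gt m (d : ℤ) with hmd | hmd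
      · have hLeq : L = (c : ℤ) * q := by rw [hL]; exact max_eq_left (by omega)
        apply hP L q
        · rw [hLeq]; ring_nf; exact le_rfl
        · rw [hLeq]
          have : (f - q) * d = (d : ℤ) * f - (d : ℤ) * q := by ring
          rw [this]; linarith [hkey, hm0]
      · have hLeq : L = (c : ℤ) * q + m - d := by rw [hL]; exact max_eq_right (by omega)
        apply hP L (q + 1)
        · rw [hLeq]
          have : (q + 1) * (c : ℤ) = (c : ℤ) * q + c := by ring
          rw [this]
          have : m - d ≤ (c : ℤ) := by omega
          linarith
        · rw [hLeq]
          have : (f - (q + 1)) * (d : ℤ) = (d : ℤ) * f - (d : ℤ) * q - d := by ring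
          rw [this]; linarith [hkey]
  · intro ℓ hℓ0 hineq
    set u : ℤ := ⌈(ℓ : ℚ) / (c : ℚ)⌉ with hu
    have h1 : ℓ ≤ u * c := by
      exact (ceil_div_le_iff' ℓ u c hc).mp le_rfl
    have h2 : ℓ - e ≤ (f - u) * d := by
      have hv : ⌈((ℓ - e : ℤ) : ℚ) / (d : ℚ)⌉ ≤ f - u := by
        have hcast : ((ℓ - e : ℤ) : ℚ) = (ℓ : ℚ) - (e : ℚ) := by push_cast; ring
        rw [hcast]; omega
      exact (ceil_div_le_iff' (ℓ - e) (f - u) d hd).mp hv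
    rcases le_or_gt u q with huq | huq
    · have : u * c ≤ q * c := by
        apply mul_le_mul_of_nonneg_right huq (by positivity)
      have hLge : (c : ℤ) * q ≤ L := by rw [hL]; exact le_max_left _ _
      have : q * (c : ℤ) = (c : ℤ) * q := by ring
      linarith
    · have huq1 : q + 1 ≤ u := huq
      have hud : (q + 1) * d ≤ u * d := by
        apply mul_le_mul_of_nonneg_right huq1 (by positivity)
      have hLge : (c : ℤ) * q + m - d ≤ L := by rw [hL]; exact le_max_right _ _
      have hexp : (f - u) * (d : ℤ) = (d : ℤ) * f - u * d := by ring
      have hexp2 : (q + 1) * (d : ℤ) = (d : ℤ) * q + d := by ring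
      -- ℓ ≤ e + (f-u)*d = s - u*d ≤ s - (q+1)*d = c*q + m - d
      linarith [hkey]
end

section
/- Let n ≥ 2, k ≥ 2, 0 ≤ s ≤ n−1, and let a, b be integers with a, b ≥ δ_{s,0} and a + b ≤ k − 1 + δ_{s,0}, where δ_{s,0} = 1 if s = 0 and 0 otherwise. Let S be the set of (n−1)-tuples x = (x_1, …, x_{n−1}) of nonnegative integers with x_1 = a and x_{n−1} = b satisfying (Ax)_i ≥ 0 for all 1 ≤ i ≤ n−1 with i ≠ s, and (Ax)_s ≥ −1 when 1 ≤ s ≤ n−1. Then S = M_1(s,n:a,b) ∪ M_2(s,n:a,b) ∪ M_3(s,n:a,b) ∪ M_4(s,n:a,b) ∪ M_5(s,n:a,b). -/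
/-- `(x_p, …, x_q) ∈ I(p, imax : q, imin)`:
`imin ≤ x_i - x_{i-1} ≤ imax` for `p < i ≤ q` and differences weakly decreasing. -/
def memI (p q : ℕ) (imax imin : ℤ) (x : ℕ → ℤ) : Prop :=
  (∀ i, p < i → i ≤ q → imin ≤ x i - x (i - 1) ∧ x i - x (i - 1) ≤ imax) ∧
  (∀ i, p < i → i < q → x (i + 1) - x i ≤ x i - x (i - 1))

/-- `(x_p, …, x_q) ∈ I*(p, imin : q, imax)`:
`imin ≤ x_{i-1} - x_i ≤ imax` for `p < i ≤ q` and drops weakly increasing. -/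
def memIStar (p q : ℕ) (imin imax : ℤ) (x : ℕ → ℤ) : Prop :=
  (∀ i, p < i → i ≤ q → imin ≤ x (i - 1) - x i ∧ x (i - 1) - x i ≤ imax) ∧
  (∀ i, p < i → i < q → x (i - 1) - x i ≤ x i - x (i + 1))

/-- the entries `x_1, …, x_{n-1}` are nonnegative. -/
def nonnegOn (n : ℕ) (x : ℕ → ℤ) : Prop := ∀ i, 1 ≤ i → i ≤ n - 1 → 0 ≤ x i

/-- the set `M_1(s, n : a, b)` of Jayne–Misra. -/
def M1 (s n : ℕ) (a b : ℤ) (x : ℕ → ℤ) : Prop :=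
  nonnegOn n x ∧ x 1 = a ∧ x (n - 1) = b ∧
  ∃ p q : ℕ, ∃ ℓ t : ℤ,
    1 ≤ p ∧ p ≤ q ∧ q < s ∧
    (∀ i, p ≤ i → i ≤ q → x i = ℓ) ∧
    x (s + 1) = x s - t ∧
    memI 1 p a 1 x ∧
    memIStar q s 1 (t + 1) x ∧
    memIStar s (n - 1) t b x ∧
    (if s = n - 1 then t = b
     else
       b + (n : ℤ) - s - 1 ≤ x s ∧
       x s ≤ min (a * ((s : ℤ) - 1) - 1) (b * ((n : ℤ) - s)) ∧
       max 1 (x s - b * ((n : ℤ) - s - 1)) ≤ t ∧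
       t ≤ (x s - b) / ((n : ℤ) - s - 1)) ∧
    max a (x s + 1) ≤ ℓ ∧
    ℓ ≤ max (a * ((t + 1) * s + x s - ((s : ℤ) * (t + 1) + x s) % (a + t + 1)) / (a + t + 1))
            (a * ((t + 1) * s + x s - ((s : ℤ) * (t + 1) + x s) % (a + t + 1)) / (a + t + 1)
              + ((s : ℤ) * (t + 1) + x s) % (a + t + 1) - (t + 1))

/-- the set `M_2(s, n : a, b)` of Jayne–Misra. -/
def M2 (s n : ℕ) (a b : ℤ) (x : ℕ → ℤ) : Prop :=
  nonnegOn n x ∧ x 1 = a ∧ x (n - 1) = b ∧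
  ∃ p q r : ℕ, ∃ ℓ : ℤ,
    1 ≤ p ∧ p ≤ q ∧ q < s ∧ s < r ∧ r ≤ n - 1 ∧
    (∀ i, p ≤ i → i ≤ q → x i = ℓ) ∧
    (∀ i, s ≤ i → i ≤ r → x i = x s) ∧
    memI 1 p a 1 x ∧
    memIStar q s 1 1 x ∧
    memIStar r (n - 1) 1 b x ∧
    max b (a - (s : ℤ) + 1) ≤ x s ∧
    x s ≤ min (b * ((n : ℤ) - s - 1)) (a * ((s : ℤ) - 1) - 1) ∧
    max a (x s + 1) ≤ ℓ ∧ ℓ ≤ a * ((s : ℤ) + x s) / (a + 1)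

/-- `M_3(s, n : a, b)` consists of the reversals of the tuples in `M_1(n-s, n : b, a)`. -/
def M3 (s n : ℕ) (a b : ℤ) (x : ℕ → ℤ) : Prop :=
  M1 (n - s) n b a (fun i => x (n - i))

/-- `M_4(s, n : a, b)` consists of the reversals of the tuples in `M_2(n-s, n : b, a)`. -/
def M4 (s n : ℕ) (a b : ℤ) (x : ℕ → ℤ) : Prop :=
  M2 (n - s) n b a (fun i => x (n - i))

/-- the set `M_5(s, n : a, b)` of Jayne–Misra. -/
def M5 (s n : ℕ) (a b : ℤ) (x : ℕ → ℤ) : Prop :=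
  nonnegOn n x ∧ x 1 = a ∧ x (n - 1) = b ∧
  ∃ q r : ℕ, ∃ ℓ : ℤ,
    1 ≤ q ∧ q ≤ r ∧ r ≤ n - 1 ∧
    (∀ i, q ≤ i → i ≤ r → x i = ℓ) ∧
    memI 1 q a 1 x ∧
    memIStar r (n - 1) 1 b x ∧
    (if 0 < s then
       q ≤ s ∧ s ≤ r ∧ max a b ≤ ℓ ∧ ℓ ≤ min ((s : ℤ) * a) (((n : ℤ) - s) * b)
     else
       max a b ≤ ℓ ∧
       ℓ ≤ max (a * (b * (n : ℤ) - (b * (n : ℤ)) % (a + b)) / (a + b))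
               (a * (b * (n : ℤ) - (b * (n : ℤ)) % (a + b)) / (a + b)
                 + (b * (n : ℤ)) % (a + b) - b))


lemma chain_le (x : ℕ → ℤ) (c : ℤ) (j k : ℕ) (hjk : j ≤ k)
    (h : ∀ i, j < i → i ≤ k → x i - x (i-1) ≤ c) : x k - x j ≤ ((k : ℤ) - (j : ℤ)) * c := by
  induction k, hjk using Nat.le_induction with
  | base => simp
  | succ m hm ih =>
    have h1 := h (m+1) (by omega) le_rfl
    have h2 : x m - x j ≤ ((m:ℤ) - j) * c := ih (fun i hi hi2 => h i hi (by omega))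
    simp only [Nat.add_sub_cancel] at h1
    push_cast
    nlinarith

lemma chain_ge (x : ℕ → ℤ) (c : ℤ) (j k : ℕ) (hjk : j ≤ k)
    (h : ∀ i, j < i → i ≤ k → c ≤ x i - x (i-1)) : ((k : ℤ) - (j : ℤ)) * c ≤ x k - x j := by
  have := chain_le (fun i => -x i) (-c) j k hjk (fun i hi hi2 => by
    have := h i hi hi2; linarith)
  nlinarith

lemma const_of (x : ℕ → ℤ) (p q : ℕ) (h : ∀ i, p < i → i ≤ q → x i = x (i-1)) :
    ∀ i, p ≤ i → i ≤ q → x i = x p := by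
  intro i hpi hiq
  induction i, hpi using Nat.le_induction with
  | base => rfl
  | succ m hm ih =>
    have := h (m+1) (by omega) hiq
    simp only [Nat.add_sub_cancel] at this
    rw [this, ih (by omega)]

lemma anti_of_local (d : ℕ → ℤ) (lo hi : ℕ) (h : ∀ i, lo ≤ i → i + 1 ≤ hi → d (i+1) ≤ d i) :
    ∀ i j, lo ≤ i → i ≤ j → j ≤ hi → d j ≤ d i := by
  intro i j hi hij hj
  induction j, hij using Nat.le_induction with
  | base => exact le_rfl
  | succ m hm ih =>
    have h1 := h m (le_trans hi hm) (by omega)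
    have h2 := ih (by omega)
    linarith

lemma maxdiv (a u N q ℓ D : ℤ) (hD : D = a + u) (ha : 0 ≤ a) (hu : 0 < u)
    (h1 : ℓ ≤ q * a) (h2 : ℓ ≤ N - q * u) :
    ℓ ≤ max (a * (N - N % D) / D) (a * (N - N % D) / D + N % D - u) := by
  have hD0 : 0 < D := by omega
  have hdm := Int.mul_ediv_add_emod N D
  have hNm : N - N % D = D * (N / D) := by linarith
  have hα : a * (N - N % D) / D = a * (N / D) := by
    rw [hNm, mul_comm D (N/D), ← mul_assoc, Int.mul_ediv_cancel _ hD0.ne']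
  rw [hα]
  rcases le_or_gt q (N / D) with h | h
  · exact le_max_of_le_left (by nlinarith)
  · have hq : N / D + 1 ≤ q := h
    have hm0 : 0 ≤ N % D := Int.emod_nonneg N hD0.ne'
    refine le_max_of_le_right ?_
    have e : (N/D + 1) * u ≤ q * u := mul_le_mul_of_nonneg_right hq hu.le
    have e2 : D * (N/D) = a*(N/D) + u*(N/D) := by rw [hD]; ring
    nlinarith

def LHSP (n s : ℕ) (a b : ℤ) (x : ℕ → ℤ) : Prop :=
  nonnegOn n x ∧ x 1 = a ∧ x (n - 1) = b ∧
  (∀ i, 1 ≤ i → i ≤ n - 1 → i ≠ s → 0 ≤ -x (i - 1) + 2 * x i - x (i + 1)) ∧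
  (1 ≤ s → -1 ≤ -x (s - 1) + 2 * x s - x (s + 1))

lemma backward_M1 (n s : ℕ) (a b : ℤ) (x : ℕ → ℤ) (hn : 2 ≤ n) (hs : s ≤ n - 1)
    (hx0 : x 0 = 0) (hxn : x n = 0) (h : M1 s n a b x) : LHSP n s a b x := by
  obtain ⟨hnn, hx1, hxb, p, q, ℓ, t, hp1, hpq, hqs, hplat, hst, ⟨hI1, hI2⟩, ⟨hJ1, hJ2⟩,
    ⟨hK1, hK2⟩, hbr, hl1, hl2⟩ := h
  have hs2 : 2 ≤ s := by omega
  have ha0 : 0 ≤ a := hx1 ▸ hnn 1 le_rfl (by omega)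
  have hb0 : 0 ≤ b := hxb ▸ hnn (n-1) (by omega) le_rfl
  have hdleft : ∀ i, p ≤ i → i ≤ q → 0 ≤ x i - x (i-1) := by
    intro i h1 h2
    rcases eq_or_lt_of_le h1 with h1' | h1'
    · by_cases hp : p = 1
      · have : i = 1 := by omega
        rw [this]; simp only [Nat.sub_self]; rw [hx0, hx1]; linarith
      · have := (hI1 i (by omega) (by omega)).1
        linarith
    · have e1 : x i = ℓ := hplat i h1 h2
      have e2 : x (i-1) = ℓ := hplat (i-1) (by omega) (by omega)
      rw [e1, e2]; linarith
  have hdright : ∀ i, p ≤ i → i ≤ q → x (i+1) - x i ≤ 0 := by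
    intro i h1 h2
    rcases eq_or_lt_of_le h2 with h2' | h2'
    · have := (hJ1 (q+1) (by omega) (by omega)).1
      simp only [Nat.add_sub_cancel] at this
      rw [h2']; linarith
    · have e1 : x i = ℓ := hplat i h1 h2
      have e2 : x (i+1) = ℓ := hplat (i+1) (by omega) (by omega)
      rw [e1, e2]; linarith
  have key : ∀ i, 1 ≤ i → i ≤ n - 1 → i ≠ s → x (i+1) - x i ≤ x i - x (i-1) := by
    intro i hi1 hi2 hne
    have hcases : (i + 1 ≤ p) ∨ (p ≤ i ∧ i ≤ q) ∨ (q < i ∧ i < s) ∨ (s < i ∧ i < n - 1)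
        ∨ (i = n - 1 ∧ s < n - 1) := by omega
    rcases hcases with hc | ⟨hc1, hc2⟩ | ⟨hc1, hc2⟩ | ⟨hc1, hc2⟩ | ⟨hc1, hc2⟩
    · by_cases h1 : i = 1
      · have h2 := (hI1 2 (by omega) (by omega)).2
        rw [h1]; simp only [Nat.sub_self]; rw [hx0, hx1]; linarith
      · exact hI2 i (by omega) (by omega)
    · have := hdleft i hc1 hc2
      have := hdright i hc1 hc2
      linarith
    · have := hJ2 i hc1 hc2
      linarith
    · have := hK2 i hc1 hc2
      linarith
    · have h2 := (hK1 (n-1) (by omega) le_rfl).2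
      rw [hxb] at h2
      subst hc1
      have en : n - 1 + 1 = n := by omega
      rw [en, hxn, hxb]
      linarith
  refine ⟨hnn, hx1, hxb, ?_, ?_⟩
  · intro i h1 h2 hne
    have := key i h1 h2 hne
    linarith
  · intro _
    have h1 := (hJ1 s hqs le_rfl).2
    rw [hst]
    linarith

lemma backward_M2 (n s : ℕ) (a b : ℤ) (x : ℕ → ℤ) (hn : 2 ≤ n) (hs : s ≤ n - 1)
    (hx0 : x 0 = 0) (hxn : x n = 0) (h : M2 s n a b x) : LHSP n s a b x := by
  obtain ⟨hnn, hx1, hxb, p, q, r, ℓ, hp1, hpq, hqs, hsr, hrn, hplat, hplat2, ⟨hI1, hI2⟩,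
    ⟨hJ1, hJ2⟩, ⟨hK1, hK2⟩, hxs1, hxs2, hl1, hl2⟩ := h
  have hs2 : 2 ≤ s := by omega
  have ha0 : 0 ≤ a := hx1 ▸ hnn 1 le_rfl (by omega)
  have hb0 : 0 ≤ b := hxb ▸ hnn (n-1) (by omega) le_rfl
  have hdleft : ∀ i, p ≤ i → i ≤ q → 0 ≤ x i - x (i-1) := by
    intro i h1 h2
    rcases eq_or_lt_of_le h1 with h1' | h1'
    · by_cases hp : p = 1
      · have : i = 1 := by omega
        rw [this]; simp only [Nat.sub_self]; rw [hx0, hx1]; linarith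
      · have := (hI1 i (by omega) (by omega)).1
        linarith
    · have e1 : x i = ℓ := hplat i h1 h2
      have e2 : x (i-1) = ℓ := hplat (i-1) (by omega) (by omega)
      rw [e1, e2]; linarith
  have hdright : ∀ i, p ≤ i → i ≤ q → x (i+1) - x i ≤ 0 := by
    intro i h1 h2
    rcases eq_or_lt_of_le h2 with h2' | h2'
    · have := (hJ1 (q+1) (by omega) (by omega)).1
      simp only [Nat.add_sub_cancel] at this
      rw [h2']; linarith
    · have e1 : x i = ℓ := hplat i h1 h2
      have e2 : x (i+1) = ℓ := hplat (i+1) (by omega) (by omega)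
      rw [e1, e2]; linarith
  have key : ∀ i, 1 ≤ i → i ≤ n - 1 → i ≠ s → x (i+1) - x i ≤ x i - x (i-1) := by
    intro i hi1 hi2 hne
    have hcases : (i + 1 ≤ p) ∨ (p ≤ i ∧ i ≤ q) ∨ (q < i ∧ i < s) ∨ (s < i ∧ i + 1 ≤ r)
        ∨ (i = r ∧ r < n - 1) ∨ (r < i ∧ i < n - 1) ∨ (i = n - 1) := by omega
    rcases hcases with hc | ⟨hc1, hc2⟩ | ⟨hc1, hc2⟩ | ⟨hc1, hc2⟩ | ⟨hc1, hc2⟩ | ⟨hc1, hc2⟩ | hc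
    · by_cases h1 : i = 1
      · have h2 := (hI1 2 (by omega) (by omega)).2
        rw [h1]; simp only [Nat.sub_self]; rw [hx0, hx1]; linarith
      · exact hI2 i (by omega) (by omega)
    · have := hdleft i hc1 hc2
      have := hdright i hc1 hc2
      linarith
    · have := hJ2 i hc1 hc2
      linarith
    · have e1 : x i = x s := hplat2 i (by omega) (by omega)
      have e2 : x (i+1) = x s := hplat2 (i+1) (by omega) hc2
      have e3 : x (i-1) = x s := hplat2 (i-1) (by omega) (by omega)
      rw [e1, e2, e3]
    · have e1 : x i = x s := hplat2 i (by omega) (by omega)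
      have e3 : x (i-1) = x s := hplat2 (i-1) (by omega) (by omega)
      have := (hK1 (i+1) (by omega) (by omega)).1
      simp only [Nat.add_sub_cancel] at this
      rw [e1, e3]; linarith
    · have := hK2 i hc1 hc2
      linarith
    · subst hc
      have en : n - 1 + 1 = n := by omega
      rw [en, hxn, hxb]
      by_cases hr : r = n - 1
      · have e1 : x (n-1) = x s := hplat2 (n-1) (by omega) (by omega)
        have e3 : x (n-1-1) = x s := hplat2 (n-1-1) (by omega) (by omega)
        rw [hxb] at e1
        rw [e3, ← e1]; linarith
      · have h2 := (hK1 (n-1) (by omega) le_rfl).2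
        rw [hxb] at h2
        linarith
  refine ⟨hnn, hx1, hxb, ?_, ?_⟩
  · intro i h1 h2 hne
    have := key i h1 h2 hne
    linarith
  · intro _
    have h1 := (hJ1 s hqs le_rfl).2
    have e2 : x (s+1) = x s := hplat2 (s+1) (by omega) (by omega)
    rw [e2]
    linarith

lemma backward_M5 (n s : ℕ) (a b : ℤ) (x : ℕ → ℤ) (hn : 2 ≤ n) (hs : s ≤ n - 1)
    (hx0 : x 0 = 0) (hxn : x n = 0) (h : M5 s n a b x) : LHSP n s a b x := by
  obtain ⟨hnn, hx1, hxb, q, r, ℓ, hq1, hqr, hrn, hplat, ⟨hI1, hI2⟩, ⟨hK1, hK2⟩, hbr⟩ := h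
  have ha0 : 0 ≤ a := hx1 ▸ hnn 1 le_rfl (by omega)
  have hb0 : 0 ≤ b := hxb ▸ hnn (n-1) (by omega) le_rfl
  have key : ∀ i, 1 ≤ i → i ≤ n - 1 → x (i+1) - x i ≤ x i - x (i-1) := by
    intro i hi1 hi2
    have hcases : (i + 1 ≤ q) ∨ (q ≤ i ∧ i ≤ r) ∨ (r < i ∧ i < n - 1)
        ∨ (i = n - 1 ∧ r < n - 1) := by omega
    rcases hcases with hc | ⟨hc1, hc2⟩ | ⟨hc1, hc2⟩ | ⟨hc1, hc2⟩
    · by_cases h1 : i = 1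
      · have h2 := (hI1 2 (by omega) (by omega)).2
        rw [h1]; simp only [Nat.sub_self]; rw [hx0, hx1]; linarith
      · exact hI2 i (by omega) (by omega)
    · have hl : 0 ≤ x i - x (i-1) := by
        rcases eq_or_lt_of_le hc1 with h1' | h1'
        · by_cases hq : q = 1
          · have : i = 1 := by omega
            rw [this]; simp only [Nat.sub_self]; rw [hx0, hx1]; linarith
          · have := (hI1 i (by omega) (by omega)).1
            linarith
        · have e1 : x i = ℓ := hplat i hc1 hc2
          have e2 : x (i-1) = ℓ := hplat (i-1) (by omega) (by omega)
          rw [e1, e2]; linarith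
      have hr : x (i+1) - x i ≤ 0 := by
        rcases eq_or_lt_of_le hc2 with h2' | h2'
        · by_cases hrn' : r = n - 1
          · have e1 : x i = ℓ := hplat i hc1 hc2
            have en : i + 1 = n := by omega
            rw [en, hxn]
            have : x (n-1) = ℓ := by rw [← hrn', ← h2', e1]
            rw [hxb] at this
            rw [e1, ← this]; linarith
          · have := (hK1 (r+1) (by omega) (by omega)).1
            simp only [Nat.add_sub_cancel] at this
            rw [h2']; linarith
        · have e1 : x i = ℓ := hplat i hc1 hc2
          have e2 : x (i+1) = ℓ := hplat (i+1) (by omega) (by omega)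
          rw [e1, e2]; linarith
      linarith
    · have := hK2 i hc1 hc2
      linarith
    · have h2 := (hK1 (n-1) (by omega) le_rfl).2
      rw [hxb] at h2
      subst hc1
      have en : n - 1 + 1 = n := by omega
      rw [en, hxn, hxb]
      linarith
  refine ⟨hnn, hx1, hxb, ?_, ?_⟩
  · intro i h1 h2 _
    have := key i h1 h2
    linarith
  · intro hs1
    have := key s hs1 hs
    linarith

lemma LHSP_congr (n s : ℕ) (a b : ℤ) (x x' : ℕ → ℤ) (hs : s ≤ n - 1) (hn : 2 ≤ n)
    (he : ∀ i, i ≤ n → x i = x' i) (h : LHSP n s a b x) : LHSP n s a b x' := by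
  obtain ⟨h1, h2, h3, h4, h5⟩ := h
  refine ⟨fun i a1 a2 => by rw [← he i (by omega)]; exact h1 i a1 a2,
    by rw [← he 1 (by omega)]; exact h2,
    by rw [← he (n-1) (by omega)]; exact h3, ?_, ?_⟩
  · intro i a1 a2 a3
    rw [← he (i-1) (by omega), ← he i (by omega), ← he (i+1) (by omega)]
    exact h4 i a1 a2 a3
  · intro a1
    rw [← he (s-1) (by omega), ← he s (by omega), ← he (s+1) (by omega)]
    exact h5 a1

lemma rev_LHSP (n s : ℕ) (a b : ℤ) (x : ℕ → ℤ) (hn : 2 ≤ n) (hs1 : 1 ≤ s) (hs : s ≤ n - 1)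
    (hx0 : x 0 = 0) (hxn : x n = 0) (h : LHSP n s a b x) :
    LHSP n (n - s) b a (fun i => x (n - i)) := by
  obtain ⟨h1, h2, h3, h4, h5⟩ := h
  refine ⟨fun i a1 a2 => h1 (n - i) (by omega) (by omega), ?_, ?_, ?_, ?_⟩
  · exact h3
  · show x (n - (n - 1)) = a
    have e : n - (n - 1) = 1 := by omega
    rw [e]; exact h2
  · intro j a1 a2 a3
    show 0 ≤ -x (n - (j - 1)) + 2 * x (n - j) - x (n - (j + 1))
    have e1 : n - (j - 1) = n - j + 1 := by omega
    have e2 : n - (j + 1) = n - j - 1 := by omega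
    rw [e1, e2]
    have := h4 (n - j) (by omega) (by omega) (by omega)
    linarith
  · intro a1
    show -1 ≤ -x (n - (n - s - 1)) + 2 * x (n - (n - s)) - x (n - (n - s + 1))
    have e1 : n - (n - s - 1) = s + 1 := by omega
    have e2 : n - (n - s) = s := by omega
    have e3 : n - (n - s + 1) = s - 1 := by omega
    rw [e1, e2, e3]
    have := h5 hs1
    linarith

lemma unrev_LHSP (n s : ℕ) (a b : ℤ) (x : ℕ → ℤ) (hn : 2 ≤ n) (hs1 : 1 ≤ s) (hs : s ≤ n - 1)
    (hx0 : x 0 = 0) (hxn : x n = 0)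
    (h : LHSP n (n - s) b a (fun i => x (n - i))) : LHSP n s a b x := by
  have h2 := rev_LHSP n (n - s) b a (fun i => x (n - i)) hn (by omega) (by omega)
    (by show x (n - 0) = 0; simpa) (by show x (n - n) = 0; simpa) h
  have e : n - (n - s) = s := by omega
  rw [e] at h2
  exact LHSP_congr n s a b _ x hs hn (fun i hi => by
    show x (n - (n - i)) = x i
    have : n - (n - i) = i := by omega
    rw [this]) h2

lemma forward_M1 (n s : ℕ) (a b : ℤ) (x : ℕ → ℤ) (hn : 2 ≤ n) (hs1 : 1 ≤ s) (hs : s ≤ n - 1)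
    (hx0 : x 0 = 0) (hxn : x n = 0) (h : LHSP n s a b x)
    (H3 : x s - x (s - 1) ≤ -1) (H4 : s < n - 1 → x (s + 1) - x s ≤ -1) : M1 s n a b x := by
  obtain ⟨hnn, hx1, hxb, hA, hAs⟩ := h
  have ha0 : 0 ≤ a := hx1 ▸ hnn 1 le_rfl (by omega)
  have hb0 : 0 ≤ b := hxb ▸ hnn (n-1) (by omega) le_rfl
  have hxs0 : 0 ≤ x s := hnn s hs1 hs
  have hd1 : x 1 - x 0 = a := by rw [hx0, hx1]; ring
  have hdn : x n - x (n-1) = -b := by rw [hxn, hxb]; ring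
  have H1 : ∀ i j, 1 ≤ i → i ≤ j → j ≤ s → x j - x (j-1) ≤ x i - x (i-1) := by
    intro i j h1 h2 h3
    refine anti_of_local (fun i => x i - x (i-1)) 1 s ?_ i j h1 h2 h3
    intro i hi1 hi2
    have := hA i hi1 (by omega) (by omega)
    show x (i+1) - x (i+1-1) ≤ x i - x (i-1)
    simp only [Nat.add_sub_cancel]
    linarith
  have H2 : ∀ i j, s + 1 ≤ i → i ≤ j → j ≤ n → x j - x (j-1) ≤ x i - x (i-1) := by
    intro i j h1 h2 h3
    refine anti_of_local (fun i => x i - x (i-1)) (s+1) n ?_ i j h1 h2 h3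
    intro i hi1 hi2
    have := hA i (by omega) (by omega) (by omega)
    show x (i+1) - x (i+1-1) ≤ x i - x (i-1)
    simp only [Nat.add_sub_cancel]
    linarith
  have hs2 : 2 ≤ s := by
    by_contra hc
    have hseq : s = 1 := by omega
    rw [hseq] at H3
    simp only [Nat.sub_self] at H3
    omega
  have ha1 : 1 ≤ a := by
    by_contra hc
    push_neg at hc
    have hch := chain_le x 0 1 (s-1) (by omega) (fun i hi1 hi2 => by
      have h5 := H1 1 i (le_refl 1) (by omega) (by omega)
      simp only [Nat.sub_self] at h5
      rw [hx0, hx1] at h5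
      linarith)
    have hx1s : x (s-1) ≤ x 1 := by linarith
    rw [hx1] at hx1s
    linarith
  -- the plateau endpoints
  have hP1 : (1:ℤ) ≤ x 1 - x (1-1) := by simp only [Nat.sub_self]; rw [hx0, hx1]; linarith
  obtain ⟨p, hpdef⟩ : ∃ p, p = Nat.findGreatest (fun i => 1 ≤ x i - x (i-1)) (s-1) := ⟨_, rfl⟩
  obtain ⟨q, hqdef⟩ : ∃ q, q = Nat.findGreatest (fun i => 0 ≤ x i - x (i-1)) (s-1) := ⟨_, rfl⟩
  have hp1 : 1 ≤ p := by rw [hpdef]; exact Nat.le_findGreatest (by omega) hP1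
  have hple : p ≤ s - 1 := by rw [hpdef]; exact Nat.findGreatest_le _
  have hPp : (1:ℤ) ≤ x p - x (p-1) := by
    have h5 := Nat.findGreatest_spec (P := fun i => 1 ≤ x i - x (i-1)) (by omega : 1 ≤ s-1) hP1
    rw [← hpdef] at h5
    exact h5
  have hq1' : (0:ℤ) ≤ x 1 - x (1-1) := by linarith
  have hQq : (0:ℤ) ≤ x q - x (q-1) := by
    have h5 := Nat.findGreatest_spec (P := fun i => 0 ≤ x i - x (i-1)) (by omega : 1 ≤ s-1) hq1'
    rw [← hqdef] at h5
    exact h5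
  have hpq : p ≤ q := by
    rw [hqdef]
    exact Nat.le_findGreatest hple (le_trans zero_le_one hPp)
  have hq1 : 1 ≤ q := le_trans hp1 hpq
  have hqle : q ≤ s - 1 := by rw [hqdef]; exact Nat.findGreatest_le _
  have hdpos : ∀ i, 1 ≤ i → i ≤ p → 1 ≤ x i - x (i-1) := by
    intro i h1 h2
    have := H1 i p h1 h2 (by omega)
    linarith
  have hdlea : ∀ i, 1 ≤ i → i ≤ s → x i - x (i-1) ≤ a := by
    intro i h1 h2
    have h5 := H1 1 i (le_refl 1) h1 h2
    simp only [Nat.sub_self] at h5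
    rw [hx0, hx1] at h5
    linarith
  have hdzero : ∀ i, p < i → i ≤ q → x i - x (i-1) = 0 := by
    intro i h1 h2
    rw [hpdef] at h1
    have hgt := Nat.findGreatest_is_greatest (P := fun i => 1 ≤ x i - x (i-1)) (n := s-1)
      h1 (by omega)
    have hge : 0 ≤ x i - x (i-1) := by
      have := H1 i q (by omega) h2 (by omega)
      linarith
    simp only [not_le] at hgt
    omega
  have hdneg : ∀ i, q < i → i ≤ s → x i - x (i-1) ≤ -1 := by
    intro i h1 h2
    rcases eq_or_lt_of_le h2 with h2' | h2'
    · rw [h2']; exact H3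
    · rw [hqdef] at h1
      have hgt := Nat.findGreatest_is_greatest (P := fun i => 0 ≤ x i - x (i-1)) (n := s-1)
        h1 (by omega)
      simp only [not_le] at hgt
      omega
  have hplat : ∀ i, p ≤ i → i ≤ q → x i = x p :=
    const_of x p q (fun i h1 h2 => by have := hdzero i h1 h2; linarith)
  have hdent : x (s-1) - x s ≤ (x s - x (s+1)) + 1 := by
    have := hAs hs1
    linarith
  have ht0 : 0 ≤ x s - x (s+1) := by
    by_cases hsn : s = n - 1
    · have e : s + 1 = n := by omega
      rw [e, hxn]
      linarith
    · have := H4 (by omega)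
      linarith
  refine ⟨hnn, hx1, hxb, p, q, x p, x s - x (s+1), hp1, hpq, by omega, hplat, by ring,
    ⟨?_, ?_⟩, ⟨?_, ?_⟩, ⟨?_, ?_⟩, ?_, ?_, ?_⟩
  · intro i h1 h2
    exact ⟨hdpos i (by omega) h2, hdlea i (by omega) (by omega)⟩
  · intro i h1 h2
    have := H1 i (i+1) (by omega) (by omega) (by omega)
    simp only [Nat.add_sub_cancel] at this
    linarith
  · intro i h1 h2
    constructor
    · have := hdneg i h1 h2
      linarith
    · have := H1 i s (by omega) h2 le_rfl
      linarith
  · intro i h1 h2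
    have := H1 i (i+1) (by omega) (by omega) (by omega)
    simp only [Nat.add_sub_cancel] at this
    linarith
  · intro i h1 h2
    have hup := H2 (s+1) i le_rfl (by omega) (by omega)
    simp only [Nat.add_sub_cancel] at hup
    have hdown := H2 i n (by omega) (by omega) le_rfl
    rw [hdn] at hdown
    exact ⟨by linarith, by linarith⟩
  · intro i h1 h2
    have := H2 i (i+1) (by omega) (by omega) (by omega)
    simp only [Nat.add_sub_cancel] at this
    linarith
  · -- the branch
    by_cases hsn : s = n - 1
    · rw [if_pos hsn]
      have e : s + 1 = n := by omega
      rw [e, hxn, hsn, hxb]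
      ring
    · rw [if_neg hsn]
      have ht1 : 1 ≤ x s - x (s+1) := by have := H4 (by omega); linarith
      have hdle : ∀ i, s < i → i ≤ n → x i - x (i-1) ≤ -(x s - x (s+1)) := by
        intro i h1 h2
        have := H2 (s+1) i (le_rfl) (by omega) h2
        simp only [Nat.add_sub_cancel] at this
        linarith
      have hdge : ∀ i, s < i → i ≤ n → -b ≤ x i - x (i-1) := by
        intro i h1 h2
        have := H2 i n (by omega) h2 le_rfl
        rw [hdn] at this
        linarith
      have hch1 := chain_le x (-1) s (n-1) (by omega)
        (fun i hi1 hi2 => by have := hdle i hi1 (by omega); linarith)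
      have hch2 := chain_ge x (-b) s n (by omega) (fun i hi1 hi2 => hdge i hi1 hi2)
      have hch3 := chain_ge x (-b) (s+1) (n-1) (by omega)
        (fun i hi1 hi2 => hdge i (by omega) (by omega))
      have hch4 := chain_le x (-(x s - x (s+1))) s (n-1) (by omega)
        (fun i hi1 hi2 => hdle i hi1 (by omega))
      have hchp := chain_le x a 1 (s-1) (by omega)
        (fun i hi1 hi2 => hdlea i (by omega) (by omega))
      have cn1 : ((n-1:ℕ):ℤ) = (n:ℤ) - 1 := by omega
      have cs1 : ((s-1:ℕ):ℤ) = (s:ℤ) - 1 := by omega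
      have cp1 : ((s+1:ℕ):ℤ) = (s:ℤ) + 1 := by omega
      rw [cn1] at hch1 hch3 hch4
      rw [cs1] at hchp
      rw [cp1] at hch3
      rw [hxb] at hch1 hch3 hch4
      rw [hxn] at hch2
      rw [hx1] at hchp
      simp only [Nat.cast_one, Nat.cast_zero] at hch1 hch2 hch3 hch4 hchp
      refine ⟨by linarith, le_min ?_ ?_, max_le (by linarith) ?_, ?_⟩
      · linarith
      · linarith
      · linarith
      · rw [Int.le_ediv_iff_mul_le (by omega : (0:ℤ) < (n:ℤ) - (s:ℤ) - 1)]
        linarith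
  · -- max a (x s + 1) ≤ x p
    have hch5 := chain_ge x 1 1 p hp1 (fun i hi1 hi2 => hdpos i (by omega) hi2)
    have hch6 := chain_le x (-1) q s (by omega) (fun i hi1 hi2 => hdneg i hi1 hi2)
    have hqp : x q = x p := hplat q hpq le_rfl
    rw [hx1] at hch5
    rw [hqp] at hch6
    simp only [Nat.cast_one, Nat.cast_zero] at hch5 hch6
    have hcp : (1:ℤ) ≤ (p:ℤ) := by omega
    have hcq : (q:ℤ) + 1 ≤ (s:ℤ) := by omega
    refine max_le (by linarith) (by linarith)
  · -- upper bound on ℓ via maxdiv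
    have egoal : ((x s - x (s+1)) + 1) * (s:ℤ) + x s = (s:ℤ) * ((x s - x (s+1)) + 1) + x s := by
      ring
    rw [egoal]
    have hch7 := chain_le x a 0 p (by omega) (fun i hi1 hi2 => hdlea i (by omega) (by omega))
    rw [hx0] at hch7
    simp only [Nat.cast_one, Nat.cast_zero] at hch7
    have hch8 := chain_ge x (-((x s - x (s+1)) + 1)) q s (by omega) (fun i hi1 hi2 => by
      have h1 := hdneg i hi1 hi2
      have h2 := H1 i s (by omega) hi2 le_rfl
      linarith)
    have hqp : x q = x p := hplat q hpq le_rfl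
    rw [hqp] at hch8
    refine maxdiv a ((x s - x (s+1)) + 1) ((s:ℤ) * ((x s - x (s+1)) + 1) + x s) (q:ℤ) (x p)
      (a + (x s - x (s+1)) + 1) (by ring) ha0 (by linarith) ?_ ?_
    · have hpq' : (p:ℤ) ≤ (q:ℤ) := by omega
      have h9 : (p:ℤ) * a ≤ (q:ℤ) * a := mul_le_mul_of_nonneg_right hpq' ha0
      linarith
    · linarith

lemma forward_M2 (n s : ℕ) (a b : ℤ) (x : ℕ → ℤ) (hn : 2 ≤ n) (hs1 : 1 ≤ s) (hsn : s < n - 1)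
    (hx0 : x 0 = 0) (hxn : x n = 0) (h : LHSP n s a b x)
    (H3 : x s - x (s - 1) = -1) (H4 : x (s + 1) - x s = 0) : M2 s n a b x := by
  obtain ⟨hnn, hx1, hxb, hA, hAs⟩ := h
  have hs : s ≤ n - 1 := by omega
  have ha0 : 0 ≤ a := hx1 ▸ hnn 1 le_rfl (by omega)
  have hb0 : 0 ≤ b := hxb ▸ hnn (n-1) (by omega) le_rfl
  have hxs0 : 0 ≤ x s := hnn s hs1 hs
  have hd1 : x 1 - x 0 = a := by rw [hx0, hx1]; ring
  have hdn : x n - x (n-1) = -b := by rw [hxn, hxb]; ring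
  have H1 : ∀ i j, 1 ≤ i → i ≤ j → j ≤ s → x j - x (j-1) ≤ x i - x (i-1) := by
    intro i j h1 h2 h3
    refine anti_of_local (fun i => x i - x (i-1)) 1 s ?_ i j h1 h2 h3
    intro i hi1 hi2
    have := hA i hi1 (by omega) (by omega)
    show x (i+1) - x (i+1-1) ≤ x i - x (i-1)
    simp only [Nat.add_sub_cancel]
    linarith
  have H2 : ∀ i j, s + 1 ≤ i → i ≤ j → j ≤ n → x j - x (j-1) ≤ x i - x (i-1) := by
    intro i j h1 h2 h3
    refine anti_of_local (fun i => x i - x (i-1)) (s+1) n ?_ i j h1 h2 h3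
    intro i hi1 hi2
    have := hA i (by omega) (by omega) (by omega)
    show x (i+1) - x (i+1-1) ≤ x i - x (i-1)
    simp only [Nat.add_sub_cancel]
    linarith
  have hs2 : 2 ≤ s := by
    by_contra hc
    have hseq : s = 1 := by omega
    rw [hseq] at H3
    simp only [Nat.sub_self] at H3
    rw [hx0, hx1] at H3
    omega
  have ha1 : 1 ≤ a := by
    by_contra hc
    push_neg at hc
    have hch := chain_le x 0 1 (s-1) (by omega) (fun i hi1 hi2 => by
      have h5 := H1 1 i (le_refl 1) (by omega) (by omega)
      simp only [Nat.sub_self] at h5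
      rw [hx0, hx1] at h5
      linarith)
    have hx1s : x (s-1) ≤ x 1 := by linarith
    rw [hx1] at hx1s
    linarith
  have hP1 : (1:ℤ) ≤ x 1 - x (1-1) := by simp only [Nat.sub_self]; rw [hx0, hx1]; linarith
  obtain ⟨p, hpdef⟩ : ∃ p, p = Nat.findGreatest (fun i => 1 ≤ x i - x (i-1)) (s-1) := ⟨_, rfl⟩
  obtain ⟨q, hqdef⟩ : ∃ q, q = Nat.findGreatest (fun i => 0 ≤ x i - x (i-1)) (s-1) := ⟨_, rfl⟩
  have hp1 : 1 ≤ p := by rw [hpdef]; exact Nat.le_findGreatest (by omega) hP1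
  have hple : p ≤ s - 1 := by rw [hpdef]; exact Nat.findGreatest_le _
  have hPp : (1:ℤ) ≤ x p - x (p-1) := by
    have h5 := Nat.findGreatest_spec (P := fun i => 1 ≤ x i - x (i-1)) (by omega : 1 ≤ s-1) hP1
    rw [← hpdef] at h5
    exact h5
  have hq1' : (0:ℤ) ≤ x 1 - x (1-1) := by linarith
  have hQq : (0:ℤ) ≤ x q - x (q-1) := by
    have h5 := Nat.findGreatest_spec (P := fun i => 0 ≤ x i - x (i-1)) (by omega : 1 ≤ s-1) hq1'
    rw [← hqdef] at h5
    exact h5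
  have hpq : p ≤ q := by
    rw [hqdef]
    exact Nat.le_findGreatest hple (le_trans zero_le_one hPp)
  have hq1 : 1 ≤ q := le_trans hp1 hpq
  have hqle : q ≤ s - 1 := by rw [hqdef]; exact Nat.findGreatest_le _
  have hdpos : ∀ i, 1 ≤ i → i ≤ p → 1 ≤ x i - x (i-1) := by
    intro i h1 h2
    have := H1 i p h1 h2 (by omega)
    linarith
  have hdlea : ∀ i, 1 ≤ i → i ≤ s → x i - x (i-1) ≤ a := by
    intro i h1 h2
    have h5 := H1 1 i (le_refl 1) h1 h2
    simp only [Nat.sub_self] at h5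
    rw [hx0, hx1] at h5
    linarith
  have hdzero : ∀ i, p < i → i ≤ q → x i - x (i-1) = 0 := by
    intro i h1 h2
    rw [hpdef] at h1
    have hgt := Nat.findGreatest_is_greatest (P := fun i => 1 ≤ x i - x (i-1)) (n := s-1)
      h1 (by omega)
    have hge : 0 ≤ x i - x (i-1) := by
      have := H1 i q (by omega) h2 (by omega)
      linarith
    simp only [not_le] at hgt
    omega
  have hdneg : ∀ i, q < i → i ≤ s → x i - x (i-1) = -1 := by
    intro i h1 h2
    have hub : x i - x (i-1) ≤ -1 := by
      rcases eq_or_lt_of_le h2 with h2' | h2'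
      · rw [h2', H3]
      · rw [hqdef] at h1
        have hgt := Nat.findGreatest_is_greatest (P := fun i => 0 ≤ x i - x (i-1)) (n := s-1)
          h1 (by omega)
        simp only [not_le] at hgt
        omega
    have hlb := H1 i s (by omega) h2 le_rfl
    rw [H3] at hlb
    omega
  have hplat : ∀ i, p ≤ i → i ≤ q → x i = x p :=
    const_of x p q (fun i h1 h2 => by have := hdzero i h1 h2; linarith)
  -- the right plateau
  have hPs1 : (0:ℤ) ≤ x (s+1) - x (s+1-1) := by
    simp only [Nat.add_sub_cancel]
    linarith
  obtain ⟨r, hrdef⟩ : ∃ r, r = Nat.findGreatest (fun i => 0 ≤ x i - x (i-1)) (n-1) := ⟨_, rfl⟩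
  have hrs : s + 1 ≤ r := by rw [hrdef]; exact Nat.le_findGreatest (by omega) hPs1
  have hrle : r ≤ n - 1 := by rw [hrdef]; exact Nat.findGreatest_le _
  have hds1 : x (s+1) - x (s+1-1) = 0 := by simp only [Nat.add_sub_cancel]; linarith
  have hdzero2 : ∀ i, s < i → i ≤ r → x i - x (i-1) = 0 := by
    intro i h1 h2
    have hub := H2 (s+1) i le_rfl (by omega) (by omega)
    rw [hds1] at hub
    have hRr : (0:ℤ) ≤ x r - x (r-1) := by
      have h5 := Nat.findGreatest_spec (P := fun i => 0 ≤ x i - x (i-1)) (m := s+1)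
        (by omega : s+1 ≤ n-1) hPs1
      rw [← hrdef] at h5
      exact h5
    have hlb := H2 i r (by omega) h2 (by omega)
    omega
  have hplat2 : ∀ i, s ≤ i → i ≤ r → x i = x s :=
    const_of x s r (fun i h1 h2 => by have := hdzero2 i h1 h2; linarith)
  have hdneg3 : ∀ i, r < i → i ≤ n - 1 → x i - x (i-1) ≤ -1 := by
    intro i h1 h2
    rw [hrdef] at h1
    have hgt := Nat.findGreatest_is_greatest (P := fun i => 0 ≤ x i - x (i-1)) (n := n-1)
      h1 h2
    simp only [not_le] at hgt
    omega
  have hdgeb : ∀ i, s < i → i ≤ n → -b ≤ x i - x (i-1) := by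
    intro i h1 h2
    have := H2 i n (by omega) h2 le_rfl
    rw [hdn] at this
    linarith
  refine ⟨hnn, hx1, hxb, p, q, r, x p, hp1, hpq, by omega, by omega, hrle, hplat, hplat2,
    ⟨?_, ?_⟩, ⟨?_, ?_⟩, ⟨?_, ?_⟩, ?_, ?_, ?_, ?_⟩
  · intro i h1 h2
    exact ⟨hdpos i (by omega) h2, hdlea i (by omega) (by omega)⟩
  · intro i h1 h2
    have := H1 i (i+1) (by omega) (by omega) (by omega)
    simp only [Nat.add_sub_cancel] at this
    linarith
  · intro i h1 h2
    have := hdneg i h1 h2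
    exact ⟨by linarith, by linarith⟩
  · intro i h1 h2
    have := H1 i (i+1) (by omega) (by omega) (by omega)
    simp only [Nat.add_sub_cancel] at this
    linarith
  · intro i h1 h2
    have h3 := hdneg3 i h1 h2
    have h4 := hdgeb i (by omega) (by omega)
    exact ⟨by linarith, by linarith⟩
  · intro i h1 h2
    have := H2 i (i+1) (by omega) (by omega) (by omega)
    simp only [Nat.add_sub_cancel] at this
    linarith
  · -- max b (a - s + 1) ≤ x s
    have hch1 := chain_le x 0 s (n-1) (by omega) (fun i hi1 hi2 => by
      rcases le_or_gt i r with hir | hir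
      · have := hdzero2 i hi1 hir; linarith
      · have := hdneg3 i hir hi2; linarith)
    have hch2 := chain_ge x (-1) 1 s (by omega) (fun i hi1 hi2 => by
      have := H1 i s (by omega) hi2 le_rfl
      rw [H3] at this
      linarith)
    rw [hxb] at hch1
    rw [hx1] at hch2
    simp only [Nat.cast_one] at hch2
    refine max_le (by linarith) (by linarith)
  · -- x s ≤ min (b(n-s-1)) (a(s-1)-1)
    have hxr : x r = x s := hplat2 r (by omega) le_rfl
    have hch3 := chain_ge x (-b) r n (by omega) (fun i hi1 hi2 => hdgeb i (by omega) hi2)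
    rw [hxn, hxr] at hch3
    have hch4 := chain_le x a 1 (s-1) (by omega)
      (fun i hi1 hi2 => hdlea i (by omega) (by omega))
    rw [hx1] at hch4
    have cs1 : ((s-1:ℕ):ℤ) = (s:ℤ) - 1 := by omega
    rw [cs1] at hch4
    simp only [Nat.cast_one] at hch4
    have hrr : (s:ℤ) + 1 ≤ (r:ℤ) := by omega
    have hmul : ((n:ℤ) - r) * b ≤ ((n:ℤ) - s - 1) * b := by
      have : (n:ℤ) - r ≤ (n:ℤ) - s - 1 := by omega
      exact mul_le_mul_of_nonneg_right this hb0
    refine le_min (by linarith) (by linarith)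
  · -- max a (x s + 1) ≤ x p
    have hch5 := chain_ge x 1 1 p hp1 (fun i hi1 hi2 => hdpos i (by omega) hi2)
    have hch6 := chain_le x (-1) q s (by omega) (fun i hi1 hi2 => by
      have := hdneg i hi1 hi2; linarith)
    have hqp : x q = x p := hplat q hpq le_rfl
    rw [hx1] at hch5
    rw [hqp] at hch6
    simp only [Nat.cast_one] at hch5 hch6
    have hcp : (1:ℤ) ≤ (p:ℤ) := by omega
    have hcq : (q:ℤ) + 1 ≤ (s:ℤ) := by omega
    refine max_le (by linarith) (by linarith)
  · -- ℓ ≤ a(s + x s)/(a+1)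
    rw [Int.le_ediv_iff_mul_le (by linarith : (0:ℤ) < a + 1)]
    have hqp : x q = x p := hplat q hpq le_rfl
    have hch7 := chain_le x a 0 p (by omega) (fun i hi1 hi2 => hdlea i (by omega) (by omega))
    rw [hx0] at hch7
    simp only [Nat.cast_zero] at hch7
    have hch8 := chain_le x (-1) q s (by omega) (fun i hi1 hi2 => by
      have := hdneg i hi1 hi2; linarith)
    have hch9 := chain_ge x (-1) q s (by omega) (fun i hi1 hi2 => by
      have := hdneg i hi1 hi2; linarith)
    rw [hqp] at hch8 hch9
    -- x s - x p = (s - q) * (-1), so q = s - x p + x s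
    have he : (q:ℤ) = (s:ℤ) - x p + x s := by linarith
    have h1 : x p ≤ (q:ℤ) * a := by
      have hpq' : (p:ℤ) ≤ (q:ℤ) := by omega
      have h9 : (p:ℤ) * a ≤ (q:ℤ) * a := mul_le_mul_of_nonneg_right hpq' ha0
      linarith
    have he2 : (q:ℤ) * a = ((s:ℤ) - x p + x s) * a := by rw [he]
    linarith

lemma forward_concave (n s : ℕ) (a b : ℤ) (x : ℕ → ℤ) (hn : 2 ≤ n) (hs : s ≤ n - 1)
    (hx0 : x 0 = 0) (hxn : x n = 0) (h : LHSP n s a b x)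
    (ha1 : s = 0 → 1 ≤ a) (hb1 : s = 0 → 1 ≤ b)
    (Hfull : ∀ i j, 1 ≤ i → i ≤ j → j ≤ n → x j - x (j-1) ≤ x i - x (i-1)) :
    M1 s n a b x ∨ M3 s n a b x ∨ M5 s n a b x := by
  obtain ⟨hnn, hx1, hxb, hA, hAs⟩ := h
  have ha0 : 0 ≤ a := hx1 ▸ hnn 1 le_rfl (by omega)
  have hb0 : 0 ≤ b := hxb ▸ hnn (n-1) (by omega) le_rfl
  have hd1 : x 1 - x 0 = a := by rw [hx0, hx1]; ring
  have hdn : x n - x (n-1) = -b := by rw [hxn, hxb]; ring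
  have hd10 : (0:ℤ) ≤ x 1 - x (1-1) := by simp only [Nat.sub_self]; rw [hx0, hx1]; linarith
  obtain ⟨Q, hQdef⟩ : ∃ Q, Q = Nat.findGreatest (fun i => 1 ≤ x i - x (i-1)) (n-1) := ⟨_, rfl⟩
  obtain ⟨R, hRdef⟩ : ∃ R, R = Nat.findGreatest (fun i => 0 ≤ x i - x (i-1)) (n-1) := ⟨_, rfl⟩
  have hR1 : 1 ≤ R := by rw [hRdef]; exact Nat.le_findGreatest (by omega) hd10
  have hRle : R ≤ n - 1 := by rw [hRdef]; exact Nat.findGreatest_le _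
  have hQle : Q ≤ n - 1 := by rw [hQdef]; exact Nat.findGreatest_le _
  have hQR : Q ≤ R := by
    rw [hQdef, hRdef]
    exact Nat.findGreatest_mono_left (fun i hi => le_trans zero_le_one hi) _
  have hdR : (0:ℤ) ≤ x R - x (R-1) := by
    have h5 := Nat.findGreatest_spec (P := fun i => 0 ≤ x i - x (i-1)) (m := 1)
      (by omega : 1 ≤ n-1) hd10
    rw [← hRdef] at h5
    exact h5
  have hdQ : Q ≠ 0 → (1:ℤ) ≤ x Q - x (Q-1) := by
    intro hQ0
    have h5 := (Nat.findGreatest_eq_iff.1 hQdef.symm).2.1 hQ0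
    exact h5
  have hdlea : ∀ i, 1 ≤ i → i ≤ n → x i - x (i-1) ≤ a := by
    intro i h1 h2
    have h5 := Hfull 1 i (le_refl 1) h1 h2
    simp only [Nat.sub_self] at h5
    rw [hx0, hx1] at h5
    linarith
  have hdgeb : ∀ i, 1 ≤ i → i ≤ n → -b ≤ x i - x (i-1) := by
    intro i h1 h2
    have := Hfull i n h1 h2 le_rfl
    rw [hdn] at this
    linarith
  have hdnegR : ∀ i, R < i → i ≤ n - 1 → x i - x (i-1) ≤ -1 := by
    intro i h1 h2
    rw [hRdef] at h1
    have hgt := Nat.findGreatest_is_greatest (P := fun i => 0 ≤ x i - x (i-1)) (n := n-1) h1 h2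
    simp only [not_le] at hgt
    omega
  have hdposQ : ∀ i, 1 ≤ i → i ≤ Q → 1 ≤ x i - x (i-1) := by
    intro i h1 h2
    have := Hfull i Q h1 h2 (by omega)
    have := hdQ (by omega)
    linarith
  have hdzero : ∀ i, Q < i → i ≤ R → x i - x (i-1) = 0 := by
    intro i h1 h2
    rw [hQdef] at h1
    have hgt := Nat.findGreatest_is_greatest (P := fun i => 1 ≤ x i - x (i-1)) (n := n-1)
      h1 (by omega)
    simp only [not_le] at hgt
    have := Hfull i R (by omega) h2 (by omega)
    omega
  -- the plateau [max 1 Q, R]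
  have hplat : ∀ i, max 1 Q ≤ i → i ≤ R → x i = x (max 1 Q) := by
    refine const_of x (max 1 Q) R (fun i h1 h2 => ?_)
    have := hdzero i (by omega) h2
    linarith
  have hmemI : memI 1 (max 1 Q) a 1 x := by
    constructor
    · intro i h1 h2
      have hQq : max 1 Q = Q := by omega
      refine ⟨hdposQ i (by omega) (by omega), hdlea i (by omega) (by omega)⟩
    · intro i h1 h2
      have := Hfull i (i+1) (by omega) (by omega) (by omega)
      simp only [Nat.add_sub_cancel] at this
      linarith
  have hmemIS : memIStar R (n-1) 1 b x := by
    constructor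
    · intro i h1 h2
      have h3 := hdnegR i h1 h2
      have h4 := hdgeb i (by omega) (by omega)
      exact ⟨by linarith, by linarith⟩
    · intro i h1 h2
      have := Hfull i (i+1) (by omega) (by omega) (by omega)
      simp only [Nat.add_sub_cancel] at this
      linarith
  have hla : a ≤ x (max 1 Q) := by
    have hch := chain_ge x 0 1 (max 1 Q) (by omega) (fun i hi1 hi2 => by
      have := hdposQ i (by omega) (by omega)
      linarith)
    rw [hx1] at hch
    simp only [Nat.cast_one] at hch
    linarith
  have hlb : b ≤ x (max 1 Q) := by
    have hch := chain_le x 0 R (n-1) (by omega) (fun i hi1 hi2 => by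
      have := hdnegR i hi1 hi2
      linarith)
    rw [hxb] at hch
    have := hplat R (by omega) le_rfl
    linarith
  have hchQa : x (max 1 Q) ≤ (max 1 Q : ℕ) * a := by
    have hch := chain_le x a 0 (max 1 Q) (by omega) (fun i hi1 hi2 =>
      hdlea i (by omega) (by omega))
    rw [hx0] at hch
    simp only [Nat.cast_zero] at hch
    linarith
  have hchQb : x (max 1 Q) ≤ ((n:ℤ) - (max 1 Q : ℕ)) * b := by
    have hch := chain_ge x (-b) (max 1 Q) n (by omega) (fun i hi1 hi2 =>
      hdgeb i (by omega) hi2)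
    rw [hxn] at hch
    linarith
  by_cases hs0 : s = 0
  · -- M5, s = 0 branch
    right; right
    subst hs0
    refine ⟨hnn, hx1, hxb, max 1 Q, R, x (max 1 Q), by omega, by omega, hRle, hplat,
      hmemI, hmemIS, ?_⟩
    rw [if_neg (by omega)]
    refine ⟨max_le hla hlb, ?_⟩
    refine maxdiv a b (b * (n:ℤ)) ((max 1 Q : ℕ):ℤ) (x (max 1 Q)) (a + b) rfl ha0
      (by have := hb1 rfl; linarith) (by linarith) (by linarith)
  · -- s ≥ 1
    have hs1 : 1 ≤ s := by omega
    rcases lt_or_ge R s with hRs | hsR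
    · -- s > R : forward_M1
      left
      refine forward_M1 n s a b x hn hs1 hs hx0 hxn ⟨hnn, hx1, hxb, hA, hAs⟩ ?_ ?_
      · exact hdnegR s hRs hs
      · intro hsn
        exact hdnegR (s+1) (by omega) (by omega)
    · rcases le_or_gt (max 1 Q) s with hQs | hsQ
      · -- q ≤ s ≤ R : M5
        right; right
        refine ⟨hnn, hx1, hxb, max 1 Q, R, x (max 1 Q), by omega, by omega, hRle, hplat,
          hmemI, hmemIS, ?_⟩
        rw [if_pos (by omega)]
        have hxs : x s = x (max 1 Q) := hplat s hQs hsR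
        have hchsa : x s ≤ (s:ℤ) * a := by
          have hch := chain_le x a 0 s (by omega) (fun i hi1 hi2 =>
            hdlea i (by omega) (by omega))
          rw [hx0] at hch
          simp only [Nat.cast_zero] at hch
          linarith
        have hchsb : x s ≤ ((n:ℤ) - s) * b := by
          have hch := chain_ge x (-b) s n (by omega) (fun i hi1 hi2 =>
            hdgeb i (by omega) hi2)
          rw [hxn] at hch
          linarith
        exact ⟨hQs, hsR, max_le hla hlb, le_min (by linarith) (by linarith)⟩
      · -- s < q : M3 via reversal
        right; left
        have hQq : max 1 Q = Q := by omega
        have hy0 : (fun i => x (n - i)) 0 = 0 := by simpa using hxn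
        have hyn : (fun i => x (n - i)) n = 0 := by simpa using hx0
        have hLy : LHSP n (n-s) b a (fun i => x (n - i)) :=
          rev_LHSP n s a b x hn hs1 hs hx0 hxn ⟨hnn, hx1, hxb, hA, hAs⟩
        refine forward_M1 n (n-s) b a (fun i => x (n - i)) hn (by omega) (by omega)
          hy0 hyn hLy ?_ ?_
        · show x (n - (n-s)) - x (n - (n-s-1)) ≤ -1
          have e1 : n - (n-s) = s := by omega
          have e2 : n - (n-s-1) = s+1 := by omega
          rw [e1, e2]
          have := hdposQ (s+1) (by omega) (by omega)
          simp only [Nat.add_sub_cancel] at this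
          linarith
        · intro hsn
          show x (n - (n-s+1)) - x (n - (n-s)) ≤ -1
          have e1 : n - (n-s) = s := by omega
          have e2 : n - (n-s+1) = s-1 := by omega
          rw [e1, e2]
          have := hdposQ s (by omega) (by omega)
          linarith

/-- Lemma 2.4 of Jayne–Misra: for `n ≥ 2`, `k ≥ 2`, `0 ≤ s ≤ n-1`, and integers
`a, b ≥ δ_{s,0}` with `a + b ≤ k - 1 + δ_{s,0}`, the set of nonnegative integer tuples
`(x_1, …, x_{n-1})` with `x_1 = a`, `x_{n-1} = b`, `(Ax)_i ≥ 0` for `i ≠ s` and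
`(Ax)_s ≥ -1` (when `1 ≤ s`) is exactly `M_1 ∪ M_2 ∪ M_3 ∪ M_4 ∪ M_5`. -/
theorem stmt_5 (n k s : ℕ) (hn : 2 ≤ n) (hk : 2 ≤ k) (hs : s ≤ n - 1)
    (a b : ℤ)
    (ha : (if s = 0 then (1 : ℤ) else 0) ≤ a)
    (hb : (if s = 0 then (1 : ℤ) else 0) ≤ b)
    (hab : a + b ≤ (k : ℤ) - 1 + (if s = 0 then (1 : ℤ) else 0))
    (x : ℕ → ℤ) (hx0 : x 0 = 0) (hxn : x n = 0) :
    (nonnegOn n x ∧ x 1 = a ∧ x (n - 1) = b ∧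
       (∀ i, 1 ≤ i → i ≤ n - 1 → i ≠ s → 0 ≤ -x (i - 1) + 2 * x i - x (i + 1)) ∧
       (1 ≤ s → -1 ≤ -x (s - 1) + 2 * x s - x (s + 1)))
      ↔ (M1 s n a b x ∨ M2 s n a b x ∨ M3 s n a b x ∨ M4 s n a b x ∨ M5 s n a b x) := by
  constructor
  · intro hL
    obtain ⟨hnn, hx1, hxb, hA, hAs⟩ := hL
    have hP : LHSP n s a b x := ⟨hnn, hx1, hxb, hA, hAs⟩
    by_cases hs0 : s = 0
    · rw [if_pos hs0] at ha hb
      have Hfull : ∀ i j, 1 ≤ i → i ≤ j → j ≤ n → x j - x (j-1) ≤ x i - x (i-1) := by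
        intro i j h1 h2 h3
        refine anti_of_local (fun i => x i - x (i-1)) 1 n ?_ i j h1 h2 h3
        intro i hi1 hi2
        have := hA i hi1 (by omega) (by omega)
        show x (i+1) - x (i+1-1) ≤ x i - x (i-1)
        simp only [Nat.add_sub_cancel]
        linarith
      rcases forward_concave n s a b x hn hs hx0 hxn hP (fun _ => ha) (fun _ => hb) Hfull
        with h | h | h
      · exact Or.inl h
      · exact Or.inr (Or.inr (Or.inl h))
      · exact Or.inr (Or.inr (Or.inr (Or.inr h)))
    · have hs1 : 1 ≤ s := by omega
      have hdent := hAs hs1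
      by_cases hnd : x (s+1) - x s ≤ x s - x (s-1)
      · have Hfull : ∀ i j, 1 ≤ i → i ≤ j → j ≤ n → x j - x (j-1) ≤ x i - x (i-1) := by
          intro i j h1 h2 h3
          refine anti_of_local (fun i => x i - x (i-1)) 1 n ?_ i j h1 h2 h3
          intro i hi1 hi2
          show x (i+1) - x (i+1-1) ≤ x i - x (i-1)
          simp only [Nat.add_sub_cancel]
          by_cases hi : i = s
          · subst hi; linarith
          · have := hA i hi1 (by omega) hi
            linarith
        rcases forward_concave n s a b x hn hs hx0 hxn hP (fun h5 => absurd h5 hs0)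
          (fun h5 => absurd h5 hs0) Hfull with h | h | h
        · exact Or.inl h
        · exact Or.inr (Or.inr (Or.inl h))
        · exact Or.inr (Or.inr (Or.inr (Or.inr h)))
      · push_neg at hnd
        have heq : x (s+1) - x s = x s - x (s-1) + 1 := by linarith
        rcases lt_trichotomy (x s - x (s-1)) (-1) with hds | hds | hds
        · exact Or.inl (forward_M1 n s a b x hn hs1 hs hx0 hxn hP (by linarith)
            (fun _ => by linarith))
        · by_cases hsn : s = n - 1
          · exact Or.inl (forward_M1 n s a b x hn hs1 hs hx0 hxn hP (by linarith)
              (fun h5 => absurd hsn (by omega)))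
          · exact Or.inr (Or.inl (forward_M2 n s a b x hn hs1 (by omega) hx0 hxn hP
              (by linarith) (by linarith)))
        · have hds0 : 0 ≤ x s - x (s-1) := by linarith
          have hds1 : 1 ≤ x (s+1) - x s := by linarith
          have hy0 : (fun i => x (n - i)) 0 = 0 := by simpa using hxn
          have hyn : (fun i => x (n - i)) n = 0 := by simpa using hx0
          have hLy := rev_LHSP n s a b x hn hs1 hs hx0 hxn hP
          have e1 : n - (n-s) = s := by omega
          have e2 : n - (n-s-1) = s+1 := by omega
          have e3 : n - (n-s+1) = s-1 := by omega
          have hH3 : (fun i => x (n-i)) (n-s) - (fun i => x (n-i)) (n-s-1) ≤ -1 := by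
            show x (n-(n-s)) - x (n-(n-s-1)) ≤ -1
            rw [e1, e2]
            linarith
          by_cases hds2 : 1 ≤ x s - x (s-1)
          · refine Or.inr (Or.inr (Or.inl (forward_M1 n (n-s) b a _ hn (by omega) (by omega)
              hy0 hyn hLy hH3 ?_)))
            intro h5
            show x (n-(n-s+1)) - x (n-(n-s)) ≤ -1
            rw [e1, e3]
            linarith
          · have hds3 : x s - x (s-1) = 0 := by omega
            by_cases hsn1 : s = 1
            · refine Or.inr (Or.inr (Or.inl (forward_M1 n (n-s) b a _ hn (by omega) (by omega)
                hy0 hyn hLy hH3 ?_)))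
              intro h5
              exact absurd h5 (by omega)
            · refine Or.inr (Or.inr (Or.inr (Or.inl (forward_M2 n (n-s) b a _ hn (by omega)
                (by omega) hy0 hyn hLy ?_ ?_))))
              · show x (n-(n-s)) - x (n-(n-s-1)) = -1
                rw [e1, e2]
                linarith
              · show x (n-(n-s+1)) - x (n-(n-s)) = 0
                rw [e1, e3]
                linarith
  · rintro (h | h | h | h | h)
    · exact backward_M1 n s a b x hn hs hx0 hxn h
    · exact backward_M2 n s a b x hn hs hx0 hxn h
    · by_cases hs0 : s = 0
      · exfalso
        subst hs0
        have h' : M1 (n - 0) n b a (fun i => x (n - i)) := h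
        obtain ⟨-, -, -, p, q, ℓ, t, -, -, hqs, -, hst, -, -, -, hbr, -, -⟩ := h'
        simp only [Nat.sub_zero] at hqs hst hbr
        have e1 : n - (n+1) = 0 := by omega
        have e2 : n - n = 0 := by omega
        rw [e1, e2, hx0] at hst
        rw [if_neg (by omega : ¬ n = n - 1)] at hbr
        have := le_trans (le_max_left 1 (x (n-n) - a * ((n:ℤ) - n - 1))) hbr.2.2.1
        linarith
      · have hL := backward_M1 n (n-s) b a (fun i => x (n - i)) hn (by omega)
          (by simpa using hxn) (by simpa using hx0) h
        exact unrev_LHSP n s a b x hn (by omega) hs hx0 hxn hL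
    · by_cases hs0 : s = 0
      · exfalso
        subst hs0
        have h' : M2 (n - 0) n b a (fun i => x (n - i)) := h
        obtain ⟨-, -, -, p, q, r, ℓ, -, -, -, hsr, hrn, -⟩ := h'
        simp only [Nat.sub_zero] at hsr
        omega
      · have hL := backward_M2 n (n-s) b a (fun i => x (n - i)) hn (by omega)
          (by simpa using hxn) (by simpa using hx0) h
        exact unrev_LHSP n s a b x hn (by omega) hs hx0 hxn hL
    · exact backward_M5 n s a b x hn hs hx0 hxn h
end

section
/- Let n ≥ 2 and 0 ≤ s ≤ n−1. If x = (x_1, …, x_{n−1}) is a tuple of integers (with the convention x_0 = x_n = 0) satisfying (Ax)_i ≥ 0 for all 1 ≤ i ≤ n−1 with i ≠ s, and (Ax)_s ≥ −1 when 1 ≤ s ≤ n−1, then x_i ≥ 0 for all 1 ≤ i ≤ n−1. -/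
/-- Integer solutions of the weight system are automatically nonnegative:
with `x_0 = x_n = 0`, if `(Ax)_i ≥ 0` for all `1 ≤ i ≤ n-1` with `i ≠ s`,
and `(Ax)_s ≥ -1` when `1 ≤ s`, then `x_i ≥ 0` for all `1 ≤ i ≤ n-1`. -/
theorem stmt_6 (n s : ℕ) (hn : 2 ≤ n) (hs : s ≤ n - 1) (x : ℕ → ℤ)
    (hx0 : x 0 = 0) (hxn : x n = 0)
    (hA : ∀ i, 1 ≤ i → i ≤ n - 1 → i ≠ s → 0 ≤ -x (i - 1) + 2 * x i - x (i + 1))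
    (hAs : 1 ≤ s → -1 ≤ -x (s - 1) + 2 * x s - x (s + 1)) :
    ∀ i, 1 ≤ i → i ≤ n - 1 → 0 ≤ x i := by
  set e : ℕ → ℤ := fun i => x (i + 1) - x i with he
  -- key: the step sequence is non-increasing except for at most one +1 jump at s
  have key : ∀ i, ∀ j, j ≤ i → i ≤ n - 1 →
      e i ≤ e j + (if j < s ∧ s ≤ i then 1 else 0) := by
    intro i
    induction i with
    | zero =>
      intro j hj _
      have hj0 : j = 0 := by omega
      subst hj0
      split <;> linarith
    | succ i ih =>
      intro j hj hi
      rcases Nat.lt_or_ge j (i + 1) with h | h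
      · have hji : j ≤ i := by omega
        have hi' : i ≤ n - 1 := by omega
        have ihh := ih j hji hi'
        by_cases hsi : i + 1 = s
        · have hs1 : 1 ≤ s := by omega
          have h1 := hAs hs1
          have hx : x (s - 1) = x i := by
            congr 1; omega
          have hx2 : x (s + 1) = x (i + 2) := by congr 1; omega
          have hxs : x s = x (i + 1) := by congr 1; omega
          rw [hx, hx2, hxs] at h1
          have hc1 : (if j < s ∧ s ≤ i + 1 then (1:ℤ) else 0) = 1 := by
            rw [if_pos ⟨by omega, by omega⟩]
          have hc0 : (if j < s ∧ s ≤ i then (1:ℤ) else 0) = 0 := by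
            rw [if_neg (by omega)]
          rw [hc1]
          rw [hc0] at ihh
          simp only [he] at ihh ⊢
          linarith
        · have h1 := hA (i + 1) (by omega) (by omega) hsi
          have hx : x (i + 1 - 1) = x i := by congr 1
          rw [hx] at h1
          have hmono : (if j < s ∧ s ≤ i then (1:ℤ) else 0) ≤
              (if j < s ∧ s ≤ i + 1 then (1:ℤ) else 0) := by
            split <;> split <;> omega
          simp only [he] at ihh ⊢
          have : x (i + 1 + 1) - x (i + 1) ≤ x (i + 1) - x i := by linarith
          linarith
      · have hji : j = i + 1 := by omega
        subst hji
        split <;> linarith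
  intro m hm1 hm2
  by_contra hneg
  push_neg at hneg
  -- there is a negative step before m
  have hstep : ∃ j, j < m ∧ e j ≤ -1 := by
    by_contra hcon
    push_neg at hcon
    have : ∀ k, k ≤ m → 0 ≤ x k := by
      intro k
      induction k with
      | zero => intro _; rw [hx0]
      | succ k ih =>
        intro hk
        have h1 := hcon k (by omega)
        have h2 := ih (by omega)
        simp only [he] at h1
        linarith
    exact absurd (this m le_rfl) (by linarith)
  obtain ⟨j, hjm, hej⟩ := hstep
  -- all steps from m on are ≤ 0
  have hsteps : ∀ k, m ≤ k → k ≤ n - 1 → e k ≤ 0 := by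
    intro k hk1 hk2
    have h1 := key k j (by omega) hk2
    split at h1 <;> linarith
  -- hence x n ≤ x m
  have hdesc : ∀ k, m ≤ k → k ≤ n → x k ≤ x m := by
    intro k hk1
    induction k, hk1 using Nat.le_induction with
    | base => intro _; exact le_rfl
    | succ k hk ih =>
      intro hkn
      have h1 := hsteps k (by omega) (by omega)
      have h2 := ih (by omega)
      simp only [he] at h1
      linarith
  have := hdesc n (by omega) le_rfl
  rw [hxn] at this
  linarith
end

section
/- Let n ≥ 2. The set of tuples x = (x_1, …, x_{n−1}) of nonnegative integers with x_1 = x_{n−1} = 1 satisfying (Ax)_i ≥ 0 for all 1 ≤ i ≤ n−1 is exactly the set of the tuples x^(ℓ) for 1 ≤ ℓ ≤ ⌊n/2⌋, where x^(ℓ)_i = min{i, ℓ, n−i} for 1 ≤ i ≤ n−1. In particular there are exactly ⌊n/2⌋ such tuples. -/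
/-- the set `M_5(0, n : 1, 1)` system: nonnegative integer tuples `(x_1, …, x_{n-1})`
with `x_1 = x_{n-1} = 1` and `(Ax)_i ≥ 0` for all `1 ≤ i ≤ n-1`
(tuples are encoded as functions `ℕ → ℤ` vanishing at `0` and from `n` on). -/
def S7 (n : ℕ) : Set (ℕ → ℤ) :=
  {x | (∀ i, i = 0 ∨ n ≤ i → x i = 0) ∧
       (∀ i, 1 ≤ i → i ≤ n - 1 → 0 ≤ x i) ∧
       x 1 = 1 ∧ x (n - 1) = 1 ∧
       (∀ i, 1 ≤ i → i ≤ n - 1 → 0 ≤ -x (i - 1) + 2 * x i - x (i + 1))}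

lemma S7_forward (n : ℕ) (hn : 2 ≤ n) (x : ℕ → ℤ) (hx : x ∈ S7 n) :
    ∃ ℓ : ℕ, 1 ≤ ℓ ∧ ℓ ≤ n / 2 ∧
      ∀ i, 1 ≤ i → i ≤ n - 1 → x i = min (min (i : ℤ) (ℓ : ℤ)) ((n : ℤ) - i) := by
  obtain ⟨hz, hp, h1, h2, hc⟩ := hx
  have hx0 : x 0 = 0 := hz 0 (Or.inl rfl)
  have hxn : x n = 0 := hz n (Or.inr le_rfl)
  -- differences are antitone
  have hd : ∀ i j, 1 ≤ i → i ≤ j → j ≤ n → x j - x (j - 1) ≤ x i - x (i - 1) := by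
    intro i j hi hij
    induction j, hij using Nat.le_induction with
    | base => intro _; exact le_rfl
    | succ j hij ih =>
      intro hjn
      have hj1 : 1 ≤ j := le_trans hi hij
      have hcj := hc j hj1 (by omega)
      have e : j + 1 - 1 = j := by omega
      rw [e]
      have := ih (by omega)
      omega
  have hdle : ∀ j, 1 ≤ j → j ≤ n → x j - x (j - 1) ≤ 1 := by
    intro j hj hjn
    have := hd 1 j le_rfl hj hjn
    simp only [Nat.sub_self] at this
    omega
  have hdge : ∀ i, 1 ≤ i → i ≤ n → -1 ≤ x i - x (i - 1) := by
    intro i hi hin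
    have := hd i n hi hin le_rfl
    have e : x (n - 1) = 1 := h2
    omega
  -- upper bound x i ≤ i
  have hub1 : ∀ i, x i ≤ (i : ℤ) := by
    intro i
    induction i with
    | zero => simp [hx0]
    | succ i ih =>
      by_cases h : i + 1 ≤ n
      · have := hdle (i + 1) (by omega) h
        have e : i + 1 - 1 = i := by omega
        rw [e] at this
        push_cast
        omega
      · have := hz (i + 1) (Or.inr (by omega))
        push_cast
        omega
  -- upper bound x (n-k) ≤ k
  have hub2 : ∀ k, k ≤ n → x (n - k) ≤ (k : ℤ) := by
    intro k
    induction k with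
    | zero => simp [hxn]
    | succ k ih =>
      intro hk
      have := hdge (n - k) (by omega) (by omega)
      have e : n - k - 1 = n - (k + 1) := by omega
      rw [e] at this
      have := ih (by omega)
      push_cast
      omega
  -- if the difference at b is ≥ 0 then x is increasing up to b
  have hinc : ∀ b, 1 ≤ b → b ≤ n → 0 ≤ x b - x (b - 1) → ∀ a, a ≤ b → x a ≤ x b := by
    intro b hb hbn hdb a hab
    have key : ∀ k, k ≤ b → x (b - k) ≤ x b := by
      intro k
      induction k with
      | zero => simp
      | succ k ih =>
        intro hk
        have hj : 1 ≤ b - k := by omega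
        have hdj := hd (b - k) b hj (by omega) hbn
        have e : b - k - 1 = b - (k + 1) := by omega
        rw [e] at hdj
        have := ih (by omega)
        omega
    have := key (b - a) (by omega)
    have e : b - (b - a) = a := by omega
    rwa [e] at this
  -- if the difference at a+1 is ≤ 0 then x is decreasing from a on
  have hdec : ∀ a, a + 1 ≤ n → x (a + 1) - x a ≤ 0 → ∀ b, a ≤ b → b ≤ n → x b ≤ x a := by
    intro a han hda b hab hbn
    have key : ∀ k, a + k ≤ n → x (a + k) ≤ x a := by
      intro k
      induction k with
      | zero => simp
      | succ k ih =>
        intro hk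
        have hdj := hd (a + 1) (a + k + 1) (by omega) (by omega) (by omega)
        have e1 : a + 1 - 1 = a := by omega
        have e2 : a + k + 1 - 1 = a + k := by omega
        rw [e1, e2] at hdj
        have := ih (by omega)
        have e3 : a + (k + 1) = a + k + 1 := by omega
        rw [e3]
        omega
    have := key (b - a) (by omega)
    have e : a + (b - a) = b := by omega
    rwa [e] at this
  set m := n / 2 with hm
  have hm1 : 1 ≤ m := by omega
  have hmn : m ≤ n - 1 := by omega
  -- differences are ≥ 0 up to m
  have hup : ∀ i, 1 ≤ i → i ≤ m → 0 ≤ x i - x (i - 1) := by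
    intro i hi him
    by_contra hne
    push_neg at hne
    have key : ∀ k, i - 1 + k ≤ n → x (i - 1 + k) ≤ x (i - 1) - k := by
      intro k
      induction k with
      | zero => simp
      | succ k ih =>
        intro hk
        have hdj := hd i (i + k) hi (by omega) (by omega)
        have e1 : i + k - 1 = i - 1 + k := by omega
        rw [e1] at hdj
        have := ih (by omega)
        have e2 : i - 1 + (k + 1) = i + k := by omega
        rw [e2]
        push_cast
        omega
    have hkey := key (n - i + 1) (by omega)
    have e : i - 1 + (n - i + 1) = n := by omega
    rw [e] at hkey
    have := hub1 (i - 1)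
    omega
  -- differences are ≤ 0 beyond m
  have hdn : ∀ i, m + 1 ≤ i → i ≤ n → x i - x (i - 1) ≤ 0 := by
    intro i hmi hin
    by_contra hne
    push_neg at hne
    have key : ∀ k, k ≤ i → (k : ℤ) ≤ x k := by
      intro k
      induction k with
      | zero => simp [hx0]
      | succ k ih =>
        intro hk
        have hdj := hd (k + 1) i (by omega) hk hin
        have e : k + 1 - 1 = k := by omega
        rw [e] at hdj
        have := ih (by omega)
        push_cast
        omega
    have h1k := key i le_rfl
    have h2k := hub2 (n - i) (by omega)
    have e : n - (n - i) = i := by omega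
    rw [e] at h2k
    omega
  -- x m is the max
  have hdm1 : x (m + 1) - x m ≤ 0 := by
    have := hdn (m + 1) le_rfl (by omega)
    have e : m + 1 - 1 = m := by omega
    rwa [e] at this
  have hmax : ∀ i, i ≤ n → x i ≤ x m := by
    intro i hin
    by_cases him : i ≤ m
    · exact hinc m hm1 (by omega) (hup m hm1 le_rfl) i him
    · exact hdec m (by omega) hdm1 i (by omega) hin
  have hl1 : 1 ≤ x m := by
    have := hinc m hm1 (by omega) (hup m hm1 le_rfl) 1 hm1
    omega
  have hl2 : x m ≤ (m : ℤ) := hub1 m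
  -- lower bound on the left
  have hlow1 : ∀ i, i ≤ m → min (i : ℤ) (x m) ≤ x i := by
    intro i
    induction i with
    | zero => simp [hx0]
    | succ i ih =>
      intro hi
      have ihi := ih (by omega)
      by_cases hcase : x m ≤ x i
      · have := hup (i + 1) (by omega) hi
        have e : i + 1 - 1 = i := by omega
        rw [e] at this
        push_cast
        omega
      · push_neg at hcase
        have hd1 : 1 ≤ x (i + 1) - x i := by
          by_contra hne
          push_neg at hne
          have := hdec i (by omega) (by omega) m (by omega) (by omega)
          omega
        push_cast
        omega
  -- lower bound on the right
  have hlow2 : ∀ k, k ≤ n - m → min (k : ℤ) (x m) ≤ x (n - k) := by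
    intro k
    induction k with
    | zero => simp [hxn]
    | succ k ih =>
      intro hk
      have ihk := ih (by omega)
      by_cases hcase : x m ≤ x (n - k)
      · have := hdn (n - k) (by omega) (by omega)
        have e : n - k - 1 = n - (k + 1) := by omega
        rw [e] at this
        push_cast
        omega
      · push_neg at hcase
        have hd1 : x (n - k) - x (n - (k + 1)) ≤ -1 := by
          by_contra hne
          push_neg at hne
          have e : n - k - 1 = n - (k + 1) := by omega
          have := hinc (n - k) (by omega) (by omega) (by rw [e]; omega) m (by omega)
          omega
        push_cast
        omega
  refine ⟨(x m).toNat, by omega, by omega, ?_⟩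
  intro i hi hin
  have hcast : ((x m).toNat : ℤ) = x m := Int.toNat_of_nonneg (by omega)
  rw [hcast]
  by_cases him : i ≤ m
  · have hu1 := hub1 i
    have hu2 := hmax i (by omega)
    have hl := hlow1 i him
    omega
  · push_neg at him
    have hu2 := hmax i (by omega)
    have hl := hlow2 (n - i) (by omega)
    have e : n - (n - i) = i := by omega
    rw [e] at hl
    have hu1 := hub2 (n - i) (by omega)
    rw [e] at hu1
    omega

lemma S7_backward (n : ℕ) (hn : 2 ≤ n) (x : ℕ → ℤ) (ℓ : ℕ) (hl1 : 1 ≤ ℓ) (hl2 : ℓ ≤ n / 2)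
    (hz : ∀ i, i = 0 ∨ n ≤ i → x i = 0)
    (hf : ∀ i, 1 ≤ i → i ≤ n - 1 → x i = min (min (i : ℤ) (ℓ : ℤ)) ((n : ℤ) - i)) :
    x ∈ S7 n := by
  have hval : ∀ j, j ≤ n → x j = min (min (j : ℤ) (ℓ : ℤ)) ((n : ℤ) - j) := by
    intro j hj
    rcases Nat.eq_zero_or_pos j with h0 | h1
    · subst h0; rw [hz 0 (Or.inl rfl)]; simp
    · rcases eq_or_lt_of_le hj with hjn | hjn
      · subst hjn; rw [hz j (Or.inr le_rfl)]; omega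
      · exact hf j h1 (by omega)
  refine ⟨hz, ?_, ?_, ?_, ?_⟩
  · intro i hi hin
    rw [hf i hi hin]
    omega
  · rw [hf 1 le_rfl (by omega)]; omega
  · rw [hf (n - 1) (by omega) le_rfl]; omega
  · intro i hi hin
    rw [hval (i - 1) (by omega), hval i (by omega), hval (i + 1) (by omega)]
    omega

/-- The solutions are exactly the tuples `x^(ℓ)_i = min {i, ℓ, n-i}` for
`1 ≤ ℓ ≤ ⌊n/2⌋`; in particular there are exactly `⌊n/2⌋` of them. -/
theorem stmt_7 (n : ℕ) (hn : 2 ≤ n) :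
    S7 n = {x : ℕ → ℤ | ∃ ℓ : ℕ, 1 ≤ ℓ ∧ ℓ ≤ n / 2 ∧
        (∀ i, i = 0 ∨ n ≤ i → x i = 0) ∧
        (∀ i, 1 ≤ i → i ≤ n - 1 → x i = min (min (i : ℤ) (ℓ : ℤ)) ((n : ℤ) - i))} ∧
    (S7 n).ncard = n / 2 := by
  have hset : S7 n = {x : ℕ → ℤ | ∃ ℓ : ℕ, 1 ≤ ℓ ∧ ℓ ≤ n / 2 ∧
      (∀ i, i = 0 ∨ n ≤ i → x i = 0) ∧
      (∀ i, 1 ≤ i → i ≤ n - 1 → x i = min (min (i : ℤ) (ℓ : ℤ)) ((n : ℤ) - i))} := by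
    ext x
    constructor
    · intro hx
      obtain ⟨ℓ, a, b, c⟩ := S7_forward n hn x hx
      exact ⟨ℓ, a, b, hx.1, c⟩
    · rintro ⟨ℓ, a, b, hz, hf⟩
      exact S7_backward n hn x ℓ a b hz hf
  refine ⟨hset, ?_⟩
  have himg : S7 n =
      (fun ℓ : ℕ => fun i : ℕ => if i < n then min (min (i : ℤ) (ℓ : ℤ)) ((n : ℤ) - i) else 0) ''
        Set.Icc 1 (n / 2) := by
    rw [hset]
    ext x
    constructor
    · rintro ⟨ℓ, a, b, hz, hf⟩
      refine ⟨ℓ, ⟨a, b⟩, ?_⟩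
      funext i
      by_cases h : i < n
      · simp only [if_pos h]
        rcases Nat.eq_zero_or_pos i with h0 | h1
        · subst h0
          rw [hz 0 (Or.inl rfl)]
          simp
        · exact (hf i h1 (by omega)).symm
      · simp only [if_neg h]
        exact (hz i (Or.inr (by omega))).symm
    · rintro ⟨ℓ, ⟨a, b⟩, rfl⟩
      refine ⟨ℓ, a, b, ?_, ?_⟩
      · intro i hi
        rcases hi with rfl | hi
        · simp only [if_pos (by omega : 0 < n)]
          simp
        · simp only [if_neg (by omega : ¬ i < n)]
      · intro i hi hin
        simp only [if_pos (by omega : i < n)]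
  rw [himg, Set.ncard_image_of_injOn, ← Finset.coe_Icc, Set.ncard_coe_finset, Nat.card_Icc]
  · omega
  · intro a ha b hb hab
    have := congrFun hab (n / 2)
    simp only [if_pos (by omega : n / 2 < n)] at this
    simp only [Set.mem_Icc] at ha hb
    omega
end

section
/- Let n ≥ 2 and 1 ≤ s ≤ n−1. The set of tuples x = (x_1, …, x_{n−1}) of nonnegative integers with x_1 = 0 and x_{n−1} = 1 satisfying (Ax)_i ≥ 0 for all 1 ≤ i ≤ n−1 with i ≠ s, and (Ax)_s ≥ −1, is exactly the set of the tuples x^(ℓ) for 1 ≤ ℓ ≤ ⌊(n−s)/2⌋, where x^(ℓ)_i = 0 for 1 ≤ i ≤ s and x^(ℓ)_i = min{i − s, ℓ, n − i} for s < i ≤ n−1. (In particular the set is empty when ⌊(n−s)/2⌋ = 0, e.g. when s = n−1.) -/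
/-- The set `M_4(s, n : 0, 1)` classification: nonnegative integer tuples
`(x_1, …, x_{n-1})` with `x_1 = 0`, `x_{n-1} = 1`, `(Ax)_i ≥ 0` for `i ≠ s`
and `(Ax)_s ≥ -1` are exactly the tuples `x^(ℓ)` with `x^(ℓ)_i = 0` for `i ≤ s`
and `x^(ℓ)_i = min {i - s, ℓ, n - i}` for `s < i ≤ n-1`, for `1 ≤ ℓ ≤ ⌊(n-s)/2⌋`.
(Tuples are encoded as functions `ℕ → ℤ` vanishing at `0` and from `n` on.) -/
theorem stmt_8 (n s : ℕ) (hn : 2 ≤ n) (hs1 : 1 ≤ s) (hs2 : s ≤ n - 1) :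
    {x : ℕ → ℤ |
        (∀ i, i = 0 ∨ n ≤ i → x i = 0) ∧
        (∀ i, 1 ≤ i → i ≤ n - 1 → 0 ≤ x i) ∧
        x 1 = 0 ∧ x (n - 1) = 1 ∧
        (∀ i, 1 ≤ i → i ≤ n - 1 → i ≠ s → 0 ≤ -x (i - 1) + 2 * x i - x (i + 1)) ∧
        -1 ≤ -x (s - 1) + 2 * x s - x (s + 1)} =
      {x : ℕ → ℤ | ∃ ℓ : ℕ, 1 ≤ ℓ ∧ ℓ ≤ (n - s) / 2 ∧
        (∀ i, i = 0 ∨ n ≤ i → x i = 0) ∧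
        (∀ i, 1 ≤ i → i ≤ s → x i = 0) ∧
        (∀ i, s < i → i ≤ n - 1 → x i = min (min ((i : ℤ) - s) (ℓ : ℤ)) ((n : ℤ) - i))} := by
  ext x
  simp only [Set.mem_setOf_eq]
  constructor
  · rintro ⟨h0, hpos, h1, hn1, hcav, hsc⟩
    have hx0 : x 0 = 0 := h0 0 (Or.inl rfl)
    have hxn : x n = 0 := h0 n (Or.inr le_rfl)
    -- Step A : x i = 0 for i ≤ s
    have hd : ∀ i, 1 ≤ i → i ≤ s → x i ≤ x (i - 1) := by
      intro i
      induction i with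
      | zero => omega
      | succ j ih =>
        intro _ hjs
        rcases Nat.eq_zero_or_pos j with hj0 | hj1
        · subst hj0
          show x 1 ≤ x 0
          omega
        · have hc := hcav j hj1 (by omega) (by omega)
          have := ih hj1 (by omega)
          simp only [Nat.add_sub_cancel]
          omega
    have hA : ∀ i, i ≤ s → x i = 0 := by
      have hle : ∀ i, i ≤ s → x i ≤ 0 := by
        intro i
        induction i with
        | zero => intro _; omega
        | succ j ih =>
          intro hjs
          have := hd (j + 1) (by omega) hjs
          have := ih (by omega)
          simp only [Nat.add_sub_cancel] at *
          omega
      intro i his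
      rcases Nat.eq_zero_or_pos i with h | h
      · subst h; exact hx0
      · have := hpos i h (by omega)
        have := hle i his
        omega
    have hsn : s + 2 ≤ n := by
      by_contra hcon
      have := hA (n - 1) (by omega)
      omega
    have hxs1 : x (s + 1) ≤ 1 := by
      have e1 := hA s le_rfl
      have e2 := hA (s - 1) (by omega)
      omega
    -- monotone differences on [s+1, n]
    have hdmono : ∀ i j, s + 1 ≤ i → i ≤ j → j ≤ n → x j - x (j - 1) ≤ x i - x (i - 1) := by
      intro i j hi hij
      induction j, hij using Nat.le_induction with
      | base => intro _; omega
      | succ j hj ih =>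
        intro hjn
        have hc := hcav j (by omega) (by omega) (by omega)
        have := ih (by omega)
        simp only [Nat.add_sub_cancel]
        omega
    have hdle1 : ∀ j, s + 1 ≤ j → j ≤ n → x j - x (j - 1) ≤ 1 := by
      intro j hj hjn
      have := hdmono (s + 1) j le_rfl hj hjn
      have e := hA s le_rfl
      simp only [Nat.add_sub_cancel] at this
      omega
    have hdge1 : ∀ j, s + 1 ≤ j → j ≤ n → -1 ≤ x j - x (j - 1) := by
      intro j hj hjn
      have := hdmono j n hj hjn le_rfl
      omega
    -- upper bounds
    have hub1 : ∀ i, s ≤ i → i ≤ n → x i ≤ (i : ℤ) - s := by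
      intro i hi
      induction i, hi using Nat.le_induction with
      | base => intro _; have := hA s le_rfl; omega
      | succ i hi ih =>
        intro hin
        have := hdle1 (i + 1) (by omega) hin
        have := ih (by omega)
        simp only [Nat.add_sub_cancel] at *
        omega
    have hub2' : ∀ k, k ≤ n - s → x (n - k) ≤ (k : ℤ) := by
      intro k
      induction k with
      | zero => intro _; simpa using hxn.le
      | succ k ih =>
        intro hk
        have hg := hdge1 (n - k) (by omega) (by omega)
        have e : n - k - 1 = n - (k + 1) := by omega
        rw [e] at hg
        have := ih (by omega)
        omega
    have hub2 : ∀ i, s ≤ i → i ≤ n → x i ≤ (n : ℤ) - i := by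
      intro i hi hin
      have := hub2' (n - i) (by omega)
      rw [Nat.sub_sub_self hin] at this
      omega
    -- once flat/decreasing, stays below
    have hflat : ∀ i j, s ≤ i → i ≤ j → j ≤ n → x (i + 1) ≤ x i → x j ≤ x i := by
      intro i j his hij
      induction j, hij using Nat.le_induction with
      | base => intro _ _; omega
      | succ j hj ih =>
        intro hjn hdrop
        have hm := hdmono (i + 1) (j + 1) (by omega) (by omega) hjn
        simp only [Nat.add_sub_cancel] at hm
        have := ih (by omega) hdrop
        omega
    -- a positive step at j forces x m = m - s for all s ≤ m ≤ j
    have hrise : ∀ j, s + 1 ≤ j → j ≤ n → 1 ≤ x j - x (j - 1) →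
        ∀ m, s ≤ m → m ≤ j → x m = (m : ℤ) - s := by
      intro j hj hjn hstep
      have hlow : ∀ m, s ≤ m → m ≤ j → (m : ℤ) - s ≤ x m := by
        intro m hm
        induction m, hm using Nat.le_induction with
        | base => intro _; have := hA s le_rfl; omega
        | succ m hm ih =>
          intro hmj
          have := hdmono (m + 1) j (by omega) hmj hjn
          simp only [Nat.add_sub_cancel] at this
          have := ih (by omega)
          omega
      intro m hm hmj
      have := hlow m hm hmj
      have := hub1 m hm (by omega)
      omega
    -- a negative step at j forces x m = n - m for all j - 1 ≤ m ≤ n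
    have hfall : ∀ j, s + 1 ≤ j → j ≤ n → x j - x (j - 1) ≤ -1 →
        ∀ m, j - 1 ≤ m → m ≤ n → x m = (n : ℤ) - m := by
      intro j hj hjn hstep
      have hlow : ∀ k, k ≤ n - (j - 1) → (k : ℤ) ≤ x (n - k) := by
        intro k
        induction k with
        | zero => intro _; simp [hxn]
        | succ k ih =>
          intro hk
          have hm := hdmono j (n - k) hj (by omega) (by omega)
          have e : n - k - 1 = n - (k + 1) := by omega
          rw [e] at hm
          have := ih (by omega)
          omega
      intro m hm hmn
      have h1 := hlow (n - m) (by omega)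
      rw [Nat.sub_sub_self hmn] at h1
      have h2 := hub2 m (by omega) hmn
      omega
    -- the midpoint
    set m : ℕ := s + (n - s) / 2 with hm_def
    have hm1 : s + 1 ≤ m := by omega
    have hm2 : m ≤ n - 1 := by omega
    have hxm : 0 ≤ x m := hpos m (by omega) hm2
    -- no negative step on (s, m]
    have hndl : ∀ t, s + 1 ≤ t → t ≤ m → 0 ≤ x t - x (t - 1) := by
      intro t ht htm
      by_contra hcon
      have hf := hfall t ht (by omega) (by omega) (t - 1) le_rfl (by omega)
      have hu := hub1 (t - 1) (by omega) (by omega)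
      omega
    -- no positive step on (m, n]
    have hndr : ∀ t, m + 1 ≤ t → t ≤ n → x t - x (t - 1) ≤ 0 := by
      intro t ht htn
      by_contra hcon
      have hr := hrise t (by omega) htn (by omega) t (by omega) le_rfl
      have hu := hub2 t (by omega) htn
      omega
    have hmonoL : ∀ i j, s ≤ i → i ≤ j → j ≤ m → x i ≤ x j := by
      intro i j hi hij
      induction j, hij using Nat.le_induction with
      | base => intro _; omega
      | succ j hj ih =>
        intro hjm
        have := hndl (j + 1) (by omega) hjm
        simp only [Nat.add_sub_cancel] at this
        have := ih (by omega)
        omega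
    have hmonoR : ∀ i j, m ≤ i → i ≤ j → j ≤ n → x j ≤ x i := by
      intro i j hi hij
      induction j, hij using Nat.le_induction with
      | base => intro _; omega
      | succ j hj ih =>
        intro hjn
        have := hndr (j + 1) (by omega) hjn
        simp only [Nat.add_sub_cancel] at this
        have := ih (by omega)
        omega
    have hLub : x m ≤ ((n - s) / 2 : ℕ) := by
      have := hub1 m (by omega) (by omega)
      omega
    -- claim L
    have hCL : ∀ i, s ≤ i → i ≤ m → x i = min ((i : ℤ) - s) (x m) := by
      intro i hi him
      rcases eq_or_lt_of_le him with he | hlt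
      · subst he; omega
      · by_cases hstep : x (i + 1) ≤ x i
        · have h1 := hflat i m hi (by omega) (by omega) hstep
          have h2 := hmonoL i m hi (by omega) le_rfl
          have h3 := hub1 i hi (by omega)
          omega
        · have hr := hrise (i + 1) (by omega) (by omega)
            (by simp only [Nat.add_sub_cancel]; omega) i hi (by omega)
          have h2 := hmonoL i m hi (by omega) le_rfl
          omega
    -- claim R
    have hCR : ∀ i, m ≤ i → i ≤ n → x i = min ((n : ℤ) - i) (x m) := by
      intro i hi hin
      rcases eq_or_lt_of_le hi with he | hlt
      · subst he
        omega
      · by_cases hstep : x i - x (i - 1) ≤ -1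
        · have hf := hfall i (by omega) hin hstep i (by omega) hin
          have h2 := hmonoR m i le_rfl hi hin
          omega
        · have hmono' : ∀ j, m ≤ j → j ≤ i → x m ≤ x j := by
            intro j hj
            induction j, hj using Nat.le_induction with
            | base => intro _; omega
            | succ j hj ih =>
              intro hji
              have := hdmono (j + 1) i (by omega) hji hin
              simp only [Nat.add_sub_cancel] at this
              have := ih (by omega)
              omega
          have h1 := hmono' i hi le_rfl
          have h2 := hmonoR m i le_rfl hi hin
          have h3 := hub2 i (by omega) hin
          omega
    refine ⟨(x m).toNat, ?_, ?_, h0, fun i _ his => hA i his, ?_⟩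
    · have := hCR (n - 1) (by omega) (by omega)
      omega
    · omega
    · intro i hi hin
      by_cases him : i ≤ m
      · have := hCL i (by omega) him
        omega
      · have := hCR i (by omega) (by omega)
        omega
  · rintro ⟨ℓ, hl1, hl2, h0, hzs, hform⟩
    have hx0 : x 0 = 0 := h0 0 (Or.inl rfl)
    have hxn : x n = 0 := h0 n (Or.inr le_rfl)
    have hsn : s + 2 * ℓ ≤ n := by omega
    have hval : ∀ i, s ≤ i → i ≤ n → x i = min (min ((i : ℤ) - s) (ℓ : ℤ)) ((n : ℤ) - i) := by
      intro i hi hin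
      rcases eq_or_lt_of_le hi with he | hlt
      · subst he
        have := hzs s hs1 le_rfl
        omega
      · by_cases hin1 : i ≤ n - 1
        · exact hform i hlt hin1
        · have hi_eq : i = n := by omega
          subst hi_eq
          omega
    refine ⟨h0, ?_, ?_, ?_, ?_, ?_⟩
    · intro i h1i hin1
      by_cases his : i ≤ s
      · rw [hzs i h1i his]
      · have := hval i (by omega) (by omega)
        omega
    · exact hzs 1 le_rfl hs1
    · have := hval (n - 1) (by omega) (by omega)
      omega
    · intro i h1i hin1 hne
      rcases lt_or_gt_of_ne hne with hlt | hgt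
      · have e2 : x i = 0 := hzs i h1i (by omega)
        have e3 : x (i + 1) = 0 := hzs (i + 1) (by omega) (by omega)
        have e1 : x (i - 1) = 0 := by
          rcases Nat.eq_or_lt_of_le h1i with h | h
          · have : i - 1 = 0 := by omega
            rw [this]; exact hx0
          · exact hzs (i - 1) (by omega) (by omega)
        omega
      · have e1 := hval (i - 1) (by omega) (by omega)
        have e2 := hval i (by omega) (by omega)
        have e3 := hval (i + 1) (by omega) (by omega)
        omega
    · have e2 : x s = 0 := hzs s hs1 le_rfl
      have e1 : x (s - 1) = 0 := by
        rcases Nat.eq_or_lt_of_le hs1 with h | h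
        · have : s - 1 = 0 := by omega
          rw [this]; exact hx0
        · exact hzs (s - 1) (by omega) (by omega)
      have e3 := hval (s + 1) (by omega) (by omega)
      omega
end

section
/- Let n ≥ 2 and 1 ≤ s ≤ n−1. The set of tuples x = (x_1, …, x_{n−1}) of nonnegative integers with x_1 = 1 and x_{n−1} = 0 satisfying (Ax)_i ≥ 0 for all 1 ≤ i ≤ n−1 with i ≠ s, and (Ax)_s ≥ −1, is exactly the set of the tuples x^(ℓ) for 1 ≤ ℓ ≤ ⌊s/2⌋, where x^(ℓ)_i = min{i, ℓ, s − i} for 1 ≤ i ≤ s and x^(ℓ)_i = 0 for s < i ≤ n−1. (In particular the set is empty when ⌊s/2⌋ = 0, e.g. when s = 1.) -/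
private lemma chainGe (x : ℕ → ℤ) (c : ℤ) (a : ℕ) :
    ∀ b, a ≤ b → (∀ j, a < j → j ≤ b → c ≤ x j - x (j - 1)) →
      x a + c * ((b : ℤ) - (a : ℤ)) ≤ x b := by
  intro b hb
  induction b, hb using Nat.le_induction with
  | base => intro _; simp
  | succ b hb ih =>
    intro h
    have h1 := h (b + 1) (by omega) le_rfl
    have h2 : x a + c * ((b : ℤ) - a) ≤ x b := ih fun j hj1 hj2 => h j hj1 (by omega)
    have hb' : b + 1 - 1 = b := by omega
    rw [hb'] at h1
    push_cast
    linarith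

private lemma chainLe (x : ℕ → ℤ) (c : ℤ) (a : ℕ) :
    ∀ b, a ≤ b → (∀ j, a < j → j ≤ b → x j - x (j - 1) ≤ c) →
      x b ≤ x a + c * ((b : ℤ) - (a : ℤ)) := by
  intro b hb h
  have := chainGe (fun i => -x i) (-c) a b hb (fun j h1 h2 => by
    have := h j h1 h2
    linarith)
  linarith

/-- The set `M_2(s, n : 1, 0)` classification: nonnegative integer tuples
`(x_1, …, x_{n-1})` with `x_1 = 1`, `x_{n-1} = 0`, `(Ax)_i ≥ 0` for `i ≠ s`
and `(Ax)_s ≥ -1` are exactly the tuples `x^(ℓ)` with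
`x^(ℓ)_i = min {i, ℓ, s - i}` for `1 ≤ i ≤ s` and `x^(ℓ)_i = 0` for `s < i ≤ n-1`,
for `1 ≤ ℓ ≤ ⌊s/2⌋`.
(Tuples are encoded as functions `ℕ → ℤ` vanishing at `0` and from `n` on.) -/
theorem stmt_9 (n s : ℕ) (hn : 2 ≤ n) (hs1 : 1 ≤ s) (hs2 : s ≤ n - 1) :
    {x : ℕ → ℤ |
        (∀ i, i = 0 ∨ n ≤ i → x i = 0) ∧
        (∀ i, 1 ≤ i → i ≤ n - 1 → 0 ≤ x i) ∧
        x 1 = 1 ∧ x (n - 1) = 0 ∧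
        (∀ i, 1 ≤ i → i ≤ n - 1 → i ≠ s → 0 ≤ -x (i - 1) + 2 * x i - x (i + 1)) ∧
        -1 ≤ -x (s - 1) + 2 * x s - x (s + 1)} =
      {x : ℕ → ℤ | ∃ ℓ : ℕ, 1 ≤ ℓ ∧ ℓ ≤ s / 2 ∧
        (∀ i, i = 0 ∨ n ≤ i → x i = 0) ∧
        (∀ i, 1 ≤ i → i ≤ s → x i = min (min (i : ℤ) (ℓ : ℤ)) ((s : ℤ) - i)) ∧
        (∀ i, s < i → i ≤ n - 1 → x i = 0)} := by
  ext x
  simp only [Set.mem_setOf_eq]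
  constructor
  · rintro ⟨h0, hpos, h1, hend, hA, hAs⟩
    have hx0 : x 0 = 0 := h0 0 (Or.inl rfl)
    have hxn : x n = 0 := h0 n (Or.inr le_rfl)
    -- Step 0: the differences x j - x (j+1) are ≤ 0 on [s, n-1]
    have hf : ∀ j, s ≤ j → j ≤ n - 1 → x j - x (j + 1) ≤ 0 := by
      intro j hj1 hj2
      have hcond : ∀ k, j < k → k ≤ n - 1 →
          (0 : ℤ) ≤ (x k - x (k + 1)) - (x (k - 1) - x (k - 1 + 1)) := by
        intro k hk1 hk2
        have hAk := hA k (by omega) (by omega) (by omega)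
        have hk' : k - 1 + 1 = k := by omega
        rw [hk']
        linarith
      have key : x j - x (j + 1) + 0 * (((n - 1 : ℕ) : ℤ) - (j : ℤ)) ≤
          x (n - 1) - x (n - 1 + 1) :=
        chainGe (fun t => x t - x (t + 1)) 0 j (n - 1) hj2 hcond
      have hn1 : n - 1 + 1 = n := by omega
      rw [hn1] at key
      have : (0 : ℤ) * (((n - 1 : ℕ) : ℤ) - (j : ℤ)) = 0 := by ring
      rw [this] at key
      omega
    -- x vanishes from s on
    have hz : ∀ i, s ≤ i → x i = 0 := by
      intro i hi
      by_cases hin : n ≤ i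
      · exact h0 i (Or.inr hin)
      · have hi2 : i ≤ n - 1 := by omega
        have hcond : ∀ k, i < k → k ≤ n - 1 → (0 : ℤ) ≤ x k - x (k - 1) := by
          intro k hk1 hk2
          have := hf (k - 1) (by omega) (by omega)
          have hk' : k - 1 + 1 = k := by omega
          rw [hk'] at this
          omega
        have key := chainGe x 0 i (n - 1) hi2 hcond
        have : (0 : ℤ) * (((n - 1 : ℕ) : ℤ) - (i : ℤ)) = 0 := by ring
        rw [this] at key
        have := hpos i (by omega) hi2
        omega
    have hzs : x s = 0 := hz s le_rfl
    have hzs1 : x (s + 1) = 0 := hz (s + 1) (by omega)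
    -- s must be at least 2
    have hs2' : 2 ≤ s := by
      by_contra hcon
      have hs1' : s = 1 := by omega
      have := hz 1 (by omega)
      omega
    set m := s / 2 with hmdef
    have hm1 : 1 ≤ m := by omega
    have hms : m ≤ s - 1 := by omega
    -- monotonicity of differences on [0, s-1]
    have hd : ∀ i j, i ≤ j → j ≤ s - 1 → x (j + 1) - x j ≤ x (i + 1) - x i := by
      intro i j hij hj
      have hcond : ∀ k, i < k → k ≤ j →
          (0 : ℤ) ≤ -(x (k + 1) - x k) - -(x (k - 1 + 1) - x (k - 1)) := by
        intro k hk1 hk2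
        have hAk := hA k (by omega) (by omega) (by omega)
        have hk' : k - 1 + 1 = k := by omega
        rw [hk']
        linarith
      have key : -(x (i + 1) - x i) + 0 * ((j : ℤ) - (i : ℤ)) ≤ -(x (j + 1) - x j) :=
        chainGe (fun t => -(x (t + 1) - x t)) 0 i j hij hcond
      have : (0 : ℤ) * ((j : ℤ) - (i : ℤ)) = 0 := by ring
      rw [this] at key
      linarith
    have hg0 : x (0 + 1) - x 0 = 1 := by
      norm_num [hx0, h1]
    -- differences are ≤ 1
    have hub : ∀ j, j ≤ s - 1 → x (j + 1) - x j ≤ 1 := by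
      intro j hj
      have := hd 0 j (by omega) hj
      omega
    -- differences are ≥ -1
    have hgs : -1 ≤ x (s - 1 + 1) - x (s - 1) := by
      have hss : s - 1 + 1 = s := by omega
      rw [hss]
      linarith [hAs]
    have hlb : ∀ j, j ≤ s - 1 → -1 ≤ x (j + 1) - x j := by
      intro j hj
      have := hd j (s - 1) hj le_rfl
      linarith [hgs]
    -- x i ≤ i
    have xlei : ∀ i, i ≤ s → x i ≤ (i : ℤ) := by
      intro i hi
      have hcond : ∀ j, 0 < j → j ≤ i → x j - x (j - 1) ≤ 1 := by
        intro j hj1 hj2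
        have := hub (j - 1) (by omega)
        have hj' : j - 1 + 1 = j := by omega
        rw [hj'] at this
        omega
      have key := chainLe x 1 0 i (Nat.zero_le i) hcond
      rw [hx0] at key
      omega
    -- x i ≤ s - i
    have xles : ∀ i, i ≤ s → x i ≤ (s : ℤ) - (i : ℤ) := by
      intro i hi
      have hcond : ∀ j, i < j → j ≤ s → (-1 : ℤ) ≤ x j - x (j - 1) := by
        intro j hj1 hj2
        have := hlb (j - 1) (by omega)
        have hj' : j - 1 + 1 = j := by omega
        rw [hj'] at this
        omega
      have key := chainGe x (-1) i s hi hcond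
      rw [hzs] at key
      have : x i + (-1) * ((s : ℤ) - (i : ℤ)) = x i - ((s : ℤ) - (i : ℤ)) := by ring
      omega
    -- the difference at m+1 is ≤ 0
    have hgm : x (m + 1) - x m ≤ 0 := by
      by_contra hc
      push_neg at hc
      have hall : ∀ j, 0 < j → j ≤ m + 1 → (1 : ℤ) ≤ x j - x (j - 1) := by
        intro j hj1 hj2
        have := hd (j - 1) m (by omega) (by omega)
        have hj' : j - 1 + 1 = j := by omega
        rw [hj'] at this
        omega
      have key := chainGe x 1 0 (m + 1) (by omega) hall
      rw [hx0] at key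
      have h2 := xles (m + 1) (by omega)
      omega
    -- x is nonincreasing past m
    have hdown : ∀ i, m ≤ i → i ≤ s → x i ≤ x m := by
      intro i hi1 hi2
      have hcond : ∀ j, m < j → j ≤ i → x j - x (j - 1) ≤ (0 : ℤ) := by
        intro j hj1 hj2
        have := hd m (j - 1) (by omega) (by omega)
        have hj' : j - 1 + 1 = j := by omega
        rw [hj'] at this
        omega
      have key := chainLe x 0 m i hi1 hcond
      omega
    -- generic: a strictly negative step before position p ≤ m forces x m = s - m
    have hbig : ∀ j, 1 ≤ j → j ≤ m → x j - x (j - 1) ≤ -1 → (s : ℤ) - (m : ℤ) ≤ x m := by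
      intro j hj1 hj2 hjneg
      have hsteps : ∀ k, m < k → k ≤ s → x k - x (k - 1) ≤ (-1 : ℤ) := by
        intro k hk1 hk2
        have := hd (j - 1) (k - 1) (by omega) (by omega)
        have h1' : j - 1 + 1 = j := by omega
        have h2' : k - 1 + 1 = k := by omega
        rw [h1', h2'] at this
        omega
      have key := chainLe x (-1) m s (by omega) hsteps
      rw [hzs] at key
      have : x m + (-1) * ((s : ℤ) - (m : ℤ)) = x m - ((s : ℤ) - (m : ℤ)) := by ring
      omega
    -- x m is the maximum of x on [0, s]
    have hpeak : ∀ i, i ≤ s → x i ≤ x m := by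
      intro i hi
      rcases le_or_gt m i with h | h
      · exact hdown i h hi
      · by_contra hc
        push_neg at hc
        rcases Classical.em (∀ j, i < j → j ≤ m → (0 : ℤ) ≤ x j - x (j - 1)) with hall | hex
        · have key := chainGe x 0 i m (by omega) hall
          have : (0 : ℤ) * ((m : ℤ) - (i : ℤ)) = 0 := by ring
          rw [this] at key
          omega
        · push_neg at hex
          obtain ⟨j, hj1, hj2, hj3⟩ := hex
          have := hbig j (by omega) hj2 (by omega)
          have hxi := xlei i (by omega)
          omega
    -- x m ≥ 1
    have hmpos : 1 ≤ x m := by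
      rcases Classical.em (∀ j, 1 < j → j ≤ m → (0 : ℤ) ≤ x j - x (j - 1)) with hall | hex
      · have key := chainGe x 0 1 m (by omega) hall
        have : (0 : ℤ) * ((m : ℤ) - (1 : ℕ)) = 0 := by ring
        rw [this] at key
        omega
      · push_neg at hex
        obtain ⟨j, hj1, hj2, hj3⟩ := hex
        have := hbig j (by omega) hj2 (by omega)
        omega
    have xlem : x m ≤ (m : ℤ) := xlei m (by omega)
    -- the shape of x on [1, s]
    have hxval : ∀ i, 1 ≤ i → i ≤ s →
        x i = min (min (i : ℤ) (x m)) ((s : ℤ) - i) := by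
      intro i hi1 hi2
      have ub1 := xlei i hi2
      have ub2 := xles i hi2
      have ub3 := hpeak i hi2
      rcases le_or_gt i m with h | h
      · rcases Classical.em (∀ j, 1 < j → j ≤ i → (1 : ℤ) ≤ x j - x (j - 1)) with hall | hex
        · have key := chainGe x 1 1 i hi1 hall
          rw [h1] at key
          omega
        · push_neg at hex
          obtain ⟨j, hj1, hj2, hj3⟩ := hex
          have hsteps : ∀ k, i < k → k ≤ m → x k - x (k - 1) ≤ (0 : ℤ) := by
            intro k hk1 hk2
            have := hd (j - 1) (k - 1) (by omega) (by omega)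
            have h1' : j - 1 + 1 = j := by omega
            have h2' : k - 1 + 1 = k := by omega
            rw [h1', h2'] at this
            omega
          have key := chainLe x 0 i m h hsteps
          omega
      · rcases Classical.em (∀ k, i < k → k ≤ s → x k - x (k - 1) ≤ (-1 : ℤ)) with hall | hex
        · have key := chainLe x (-1) i s hi2 hall
          rw [hzs] at key
          have : x i + (-1) * ((s : ℤ) - (i : ℤ)) = x i - ((s : ℤ) - (i : ℤ)) := by ring
          omega
        · push_neg at hex
          obtain ⟨k, hk1, hk2, hk3⟩ := hex
          have hsteps : ∀ t, m < t → t ≤ i → (0 : ℤ) ≤ x t - x (t - 1) := by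
            intro t ht1 ht2
            have := hd (t - 1) (k - 1) (by omega) (by omega)
            have h1' : t - 1 + 1 = t := by omega
            have h2' : k - 1 + 1 = k := by omega
            rw [h1', h2'] at this
            omega
          have key := chainGe x 0 m i h.le hsteps
          have : (0 : ℤ) * ((i : ℤ) - (m : ℤ)) = 0 := by ring
          rw [this] at key
          omega
    refine ⟨(x m).toNat, by omega, by omega, h0, ?_, fun i hi1 hi2 => hz i (by omega)⟩
    intro i hi1 hi2
    have hv := hxval i hi1 hi2
    omega
  · rintro ⟨ℓ, hl1, hl2, h0, hmid, htail⟩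
    have hM : ∀ j, x j = if j ≤ s then min (min (j : ℤ) (ℓ : ℤ)) ((s : ℤ) - j) else 0 := by
      intro j
      rcases Nat.eq_zero_or_pos j with h | h
      · subst h
        rw [h0 0 (Or.inl rfl), if_pos (Nat.zero_le s)]
        omega
      · by_cases hj : j ≤ s
        · rw [if_pos hj]
          exact hmid j h hj
        · rw [if_neg hj]
          by_cases hj2 : j ≤ n - 1
          · exact htail j (by omega) hj2
          · exact h0 j (Or.inr (by omega))
    refine ⟨h0, ?_, ?_, ?_, ?_, ?_⟩
    · intro i hi1 hi2
      rw [hM]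
      split_ifs <;> omega
    · rw [hM]
      split_ifs <;> omega
    · rw [hM]
      split_ifs <;> omega
    · intro i hi1 hi2 his
      rw [hM, hM, hM]
      split_ifs <;> omega
    · rw [hM, hM, hM]
      split_ifs <;> omega
end

section
/- Let n ≥ 2. The number of tuples x = (x_1, …, x_{n−1}) of nonnegative integers satisfying (Ax)_i ≥ 0 for all 1 ≤ i ≤ n−1 and x_1 + x_{n−1} ≤ 2 is exactly ⌊n/2⌋ + 1. -/
/-- Trapezoid tuple of height `k`. -/
def fTuple (n k i : ℕ) : ℤ := max 0 (min (min (i:ℤ) (k:ℤ)) ((n:ℤ) - (i:ℤ)))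

lemma teleGe (x : ℕ → ℤ) (c : ℤ) (i j : ℕ) (hij : i ≤ j)
    (h : ∀ l, i < l → l ≤ j → c ≤ x l - x (l - 1)) :
    x i + c * ((j:ℤ) - (i:ℤ)) ≤ x j := by
  induction j, hij using Nat.le_induction with
  | base => simp
  | succ j hj ih =>
    have h1 := h (j+1) (by omega) le_rfl
    have h2 := ih (fun l hl1 hl2 => h l hl1 (by omega))
    simp only [Nat.add_sub_cancel] at h1
    push_cast
    push_cast at h2
    linarith

lemma teleLe (x : ℕ → ℤ) (c : ℤ) (i j : ℕ) (hij : i ≤ j)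
    (h : ∀ l, i < l → l ≤ j → x l - x (l - 1) ≤ c) :
    x j ≤ x i + c * ((j:ℤ) - (i:ℤ)) := by
  have := teleGe (fun t => -x t) (-c) i j hij
    (fun l hl1 hl2 => by have := h l hl1 hl2; linarith)
  linarith

lemma dmono (n : ℕ) (hn : 2 ≤ n) (x : ℕ → ℤ)
    (h2 : ∀ i, 1 ≤ i → i ≤ n - 1 → 0 ≤ -x (i - 1) + 2 * x i - x (i + 1)) :
    ∀ i j, 1 ≤ i → i ≤ j → j ≤ n → x j - x (j - 1) ≤ x i - x (i - 1) := by
  intro i j h1 hij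
  induction j, hij using Nat.le_induction with
  | base => intro _; exact le_rfl
  | succ j hj ih =>
    intro hjn
    have hih := ih (by omega)
    have hc := h2 j (by omega) (by omega)
    simp only [Nat.add_sub_cancel]
    linarith

/-- The number of maximal dominant weights of the level-2 module `V(2Λ_0)` of
affine `sl(n)`: the number of nonnegative integer tuples `(x_1, …, x_{n-1})`
with `(Ax)_i ≥ 0` for all `1 ≤ i ≤ n-1` and `x_1 + x_{n-1} ≤ 2` is `⌊n/2⌋ + 1`.
(Tuples are encoded as functions `ℕ → ℤ` vanishing at `0` and from `n` on.) -/
theorem stmt_10 (n : ℕ) (hn : 2 ≤ n) :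
    Set.ncard {x : ℕ → ℤ |
      (∀ i, i = 0 ∨ n ≤ i → x i = 0) ∧
      (∀ i, 1 ≤ i → i ≤ n - 1 → 0 ≤ x i) ∧
      (∀ i, 1 ≤ i → i ≤ n - 1 → 0 ≤ -x (i - 1) + 2 * x i - x (i + 1)) ∧
      x 1 + x (n - 1) ≤ 2} = n / 2 + 1 := by
  classical
  set m := n / 2 with hm
  have key : {x : ℕ → ℤ |
      (∀ i, i = 0 ∨ n ≤ i → x i = 0) ∧
      (∀ i, 1 ≤ i → i ≤ n - 1 → 0 ≤ x i) ∧
      (∀ i, 1 ≤ i → i ≤ n - 1 → 0 ≤ -x (i - 1) + 2 * x i - x (i + 1)) ∧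
      x 1 + x (n - 1) ≤ 2} = ↑((Finset.range (m+1)).image (fun k => fTuple n k)) := by
    ext x
    simp only [Set.mem_setOf_eq, Finset.coe_image, Finset.coe_range, Set.mem_image,
      Set.mem_Iio]
    constructor
    · rintro ⟨h0, h1, h2, h3⟩
      have hx0 : x 0 = 0 := h0 0 (Or.inl rfl)
      have hxn : x n = 0 := h0 n (Or.inr le_rfl)
      have hmono := dmono n hn x h2
      -- x 1 ≤ 1
      have hx1nn : 0 ≤ x 1 := h1 1 le_rfl (by omega)
      have hxn1nn : 0 ≤ x (n-1) := h1 (n-1) (by omega) le_rfl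
      have hx1 : x 1 ≤ 1 := by
        by_contra hcon
        push_neg at hcon
        have hxn1 : x (n-1) = 0 := by omega
        have hdn : (0:ℤ) ≤ x n - x (n-1) := by omega
        have := teleGe x 0 1 n (by omega)
          (fun l hl1 hl2 => le_trans hdn (hmono l n (by omega) hl2 le_rfl))
        simp at this
        omega
      have hxn1 : x (n-1) ≤ 1 := by
        by_contra hcon
        push_neg at hcon
        have hx1' : x 1 = 0 := by omega
        have hd1 : x 1 - x 0 ≤ 0 := by omega
        have := teleLe x 0 0 (n-1) (by omega)
          (fun l hl1 hl2 => by
            have := hmono 1 l le_rfl hl1 (by omega)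
            simpa using le_trans this hd1)
        omega
      have hdle : ∀ l, 1 ≤ l → l ≤ n → x l - x (l-1) ≤ 1 := by
        intro l hl1 hl2
        have := hmono 1 l le_rfl hl1 hl2
        simp at this
        omega
      have hdge : ∀ l, 1 ≤ l → l ≤ n → -1 ≤ x l - x (l-1) := by
        intro l hl1 hl2
        have := hmono l n hl1 hl2 le_rfl
        omega
      have hub1 : ∀ i, i ≤ n → x i ≤ (i:ℤ) := by
        intro i hi
        have := teleLe x 1 0 i (by omega) (fun l hl1 hl2 => hdle l hl1 (by omega))
        simp at this
        omega
      have hub2 : ∀ i, i ≤ n → x i ≤ (n:ℤ) - i := by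
        intro i hi
        have := teleGe x (-1) i n hi (fun l hl1 hl2 => hdge l (by omega) hl2)
        omega
      have hm1 : 1 ≤ m := by omega
      have hmn : m ≤ n - 1 := by omega
      have hmnn : 0 ≤ x m := h1 m hm1 hmn
      have hmub : x m ≤ (m:ℤ) := hub1 m (by omega)
      -- x i ≤ x m for all i ≤ n
      have hk_max : ∀ i, i ≤ n → x i ≤ x m := by
        intro i hi
        rcases le_or_gt i m with hcase|hcase
        · by_contra hc
          push_neg at hc
          have hex : ∃ j, i < j ∧ j ≤ m ∧ x j - x (j-1) ≤ -1 := by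
            by_contra hne
            push_neg at hne
            have := teleGe x 0 i m hcase
              (fun l hl1 hl2 => by have := hne l hl1 hl2; omega)
            omega
          obtain ⟨j, hj1, hj2, hj3⟩ := hex
          have := teleLe x (-1) m n (by omega)
            (fun l hl1 hl2 => le_trans (hmono j l (by omega) (by omega) hl2) hj3)
          have h6 := hub1 i hi
          omega
        · by_contra hc
          push_neg at hc
          have hex : ∃ j, m < j ∧ j ≤ i ∧ 1 ≤ x j - x (j-1) := by
            by_contra hne
            push_neg at hne
            have := teleLe x 0 m i (by omega)
              (fun l hl1 hl2 => by have := hne l hl1 hl2; omega)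
            omega
          obtain ⟨j, hj1, hj2, hj3⟩ := hex
          have := teleGe x 1 0 m (by omega)
            (fun l hl1 hl2 => le_trans hj3 (hmono l j hl1 (by omega) (by omega)))
          have h6 := hub2 i hi
          simp at this
          omega
      -- lower bound
      have hlb : ∀ i, 1 ≤ i → i ≤ n - 1 →
          min (min (i:ℤ) (x m)) ((n:ℤ) - i) ≤ x i := by
        intro i h1i h2i
        rcases le_or_gt i m with hcase|hcase
        · rcases le_or_gt (i:ℤ) (x i) with h'|h'
          · omega
          · have hex : ∃ j, 1 ≤ j ∧ j ≤ i ∧ x j - x (j-1) ≤ 0 := by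
              by_contra hne
              push_neg at hne
              have := teleGe x 1 0 i (by omega)
                (fun l hl1 hl2 => by have := hne l hl1 hl2; omega)
              simp at this
              omega
            obtain ⟨j, hj1, hj2, hj3⟩ := hex
            have := teleLe x 0 i m hcase
              (fun l hl1 hl2 => le_trans (hmono j l hj1 (by omega) (by omega)) hj3)
            omega
        · rcases le_or_gt ((n:ℤ) - i) (x i) with h'|h'
          · omega
          · have hex : ∃ j, i < j ∧ j ≤ n ∧ 0 ≤ x j - x (j-1) := by
              by_contra hne
              push_neg at hne
              have := teleLe x (-1) i n (by omega)
                (fun l hl1 hl2 => by have := hne l hl1 hl2; omega)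
              omega
            obtain ⟨j, hj1, hj2, hj3⟩ := hex
            have := teleGe x 0 m i (by omega)
              (fun l hl1 hl2 => le_trans hj3 (hmono l j (by omega) (by omega) hj2))
            omega
      refine ⟨(x m).toNat, by omega, ?_⟩
      funext i
      have htn : ((x m).toNat : ℤ) = x m := Int.toNat_of_nonneg hmnn
      unfold fTuple
      rcases Nat.lt_or_ge i 1 with hi0|hi1
      · have : i = 0 := by omega
        subst this
        rw [hx0]
        omega
      rcases Nat.lt_or_ge i n with hin|hin
      · have hu1 := hub1 i (by omega)
        have hu2 := hub2 i (by omega)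
        have huk := hk_max i (by omega)
        have hl := hlb i hi1 (by omega)
        have hnn := h1 i hi1 (by omega)
        omega
      · rw [h0 i (Or.inr hin)]
        omega
    · rintro ⟨k, hk, rfl⟩
      refine ⟨?_, ?_, ?_, ?_⟩
      · intro i hi
        unfold fTuple
        rcases hi with hi|hi <;> omega
      · intro i _ _
        unfold fTuple
        omega
      · intro i h1i h2i
        unfold fTuple
        omega
      · unfold fTuple
        omega
  rw [key, Set.ncard_coe_finset, Finset.card_image_of_injOn, Finset.card_range]
  intro a ha b hb hab
  simp only [Finset.coe_range, Set.mem_Iio] at ha hb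
  have h2 := congrFun hab m
  simp only [fTuple] at h2
  omega
end

section
/- Let n ≥ 2 and 1 ≤ ℓ ≤ ⌊n/2⌋. The number of pairs (Y_1, Y_2) ∈ B(2Λ_0) whose total box-color counts are exactly ℓ boxes of color 0, exactly ℓ−j boxes of each of the colors j and n−j for every 1 ≤ j ≤ ℓ−1, and no boxes of any other color, equals the ℓ-th Catalan number C(2ℓ, ℓ)/(ℓ+1). -/
/-!
Neither diagram has a box of color `ℓ` or `n - ℓ`, which confines both to the `ℓ × ℓ` square.
There, as `2ℓ ≤ n`, the color of a box determines its content `t ∈ (-ℓ, ℓ)`, and the weight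
condition says that on each diagonal the two diagrams have `ℓ - |t|` boxes together, as many as
the square. A partition in the square is determined by its diagonal lengths, so `Y₂` is the
complement of `Y₁` in the square turned by a half turn and transposed, and then `Y₁ ⊇ Y₂` says
exactly that `Y₁` contains the staircase `(ℓ, ℓ - 1, …, 1)`. Such partitions `λ` correspond to the
Dyck paths of semilength `ℓ` whose `i`-th up step is preceded by `ℓ - λᵢ` down steps, so there
are `catalan ℓ` of them.
-/

/-- A charge-0 extended Young diagram: a weakly increasing sequence of nonpositive
integers which is eventually `0`. -/
def IsEYD0 (y : ℕ → ℤ) : Prop :=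
  Monotone y ∧ (∀ i, y i ≤ 0) ∧ ∃ N, ∀ i, N ≤ i → y i = 0

/-- The number of boxes of the charge-0 extended Young diagram `y` of color `j`
(a residue mod `n`): boxes are pairs `(i, b)` with `y i ≤ b ≤ -1`, and the box
`(i, b)` has color `(i + b + 1) mod n`. -/
noncomputable def colorCount (n : ℕ) (y : ℕ → ℤ) (j : ℕ) : ℕ :=
  Set.ncard {p : ℕ × ℤ |
    y p.1 ≤ p.2 ∧ p.2 ≤ -1 ∧ ((p.1 : ℤ) + p.2 + 1) % (n : ℤ) = (j : ℤ)}

/-- Membership in the crystal `B(kΛ_0)` for a `k`-tuple `(Y 1, …, Y k)` of charge-0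
extended Young diagrams (recall `Y ⊇ Y'` means `Y_i ≤ Y'_i` for all `i`):
`Y_1 ⊇ Y_2 ⊇ ⋯ ⊇ Y_k ⊇ Y_1[n]`, and for each `i ≥ 0` there is `1 ≤ j ≤ k` with
`(Y_{j+1})_i > (Y_j)_{i+1}`, where `Y_{k+1} = Y_1[n]`. -/
def MemB (n k : ℕ) (Y : ℕ → ℕ → ℤ) : Prop :=
  (∀ j, 1 ≤ j → j ≤ k → IsEYD0 (Y j)) ∧
  (∀ j, 1 ≤ j → j < k → ∀ i, Y j i ≤ Y (j + 1) i) ∧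
  (∀ i, Y k i ≤ Y 1 i + (n : ℤ)) ∧
  (∀ i : ℕ, ∃ j, 1 ≤ j ∧ j ≤ k ∧
    Y j (i + 1) < (if j = k then Y 1 i + (n : ℤ) else Y (j + 1) i))

/-- The `k`-tuple `(Y 1, …, Y k)` has total box-color counts of the weight
`kΛ_0 - γ_ℓ`: exactly `ℓ` boxes of color `0`, exactly `ℓ - j` boxes of each of the
colors `j` and `n - j` for `1 ≤ j ≤ ℓ - 1`, and no boxes of any other color. -/
def WeightCond (n k ℓ : ℕ) (Y : ℕ → ℕ → ℤ) : Prop :=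
  ∀ c, c < n →
    (∑ j ∈ Finset.Icc 1 k, colorCount n (Y j) c) =
      (if c = 0 then ℓ
       else if c ≤ ℓ - 1 then ℓ - c
       else if n - ℓ + 1 ≤ c then ℓ - (n - c)
       else 0)

namespace CrystalCatalan

open Finset

lemma mem_iff_lt_add_card_filter {P : ℕ → Prop} [DecidablePred P] {lo m i : ℕ}
    (h_lo : ∀ j < lo, ¬P j) (h_down : ∀ j k, lo ≤ j → j ≤ k → k < m → P k → P j)
    (hi : lo ≤ i) (him : i < m) : P i ↔ i < lo + #{j ∈ range m | P j} := by
  constructor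
  · intro hPi
    have hsub : Ico lo (i + 1) ⊆ {j ∈ range m | P j} := fun j hj => by
      rw [mem_Ico] at hj
      exact mem_filter.2 ⟨mem_range.2 (by omega), h_down j i hj.1 (by omega) him hPi⟩
    have := card_le_card hsub
    rw [Nat.card_Ico] at this
    omega
  · intro hlt
    by_contra hPi
    have hsub : {j ∈ range m | P j} ⊆ Ico lo i := fun j hj => by
      obtain ⟨hjm, hPj⟩ := mem_filter.1 hj
      rw [mem_range] at hjm
      rw [mem_Ico]
      by_contra hji
      rcases Nat.lt_or_ge j lo with hjlo | hjlo
      · exact h_lo j hjlo hPj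
      · exact hPi (h_down i j hi (by omega) hjm hPj)
    have := card_le_card hsub
    rw [Nat.card_Ico] at this
    omega

lemma mem_iff_lt_card_filter {P : ℕ → Prop} [DecidablePred P] {m i : ℕ}
    (h_down : ∀ j k, j ≤ k → k < m → P k → P j) (him : i < m) :
    P i ↔ i < #{j ∈ range m | P j} := by
  simpa using
    mem_iff_lt_add_card_filter (lo := 0) (by simp) (fun j k _ => h_down j k) (Nat.zero_le i) him

section Dyck

open DyckStep

def upCount (w : List DyckStep) (k : ℕ) : ℕ := (w.take k).count U

lemma upCount_mono (w : List DyckStep) : Monotone (upCount w) := fun k k' hk => by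
  simpa [upCount, List.take_take, min_eq_left hk] using
    (List.take_sublist k (w.take k')).count_le U

lemma upCount_le (w : List DyckStep) (k : ℕ) : upCount w k ≤ k :=
  (List.count_le_length ..).trans (List.length_take_le ..)

lemma upCount_succ (w : List DyckStep) (k : ℕ) :
    upCount w (k + 1) = upCount w k + (w[k]?.toList).count U := by
  rw [upCount, upCount, List.take_add_one, List.count_append]

lemma upCount_succ_le (w : List DyckStep) (k : ℕ) : upCount w (k + 1) ≤ upCount w k + 1 := by
  rw [upCount_succ]
  rcases w[k]? with _ | s
  · simp
  · cases s <;> simp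

lemma eq_of_upCount_eq {w w' : List DyckStep} (hlen : w.length = w'.length)
    (h : ∀ k, upCount w k = upCount w' k) : w = w' := by
  refine List.ext_getElem hlen fun k hk hk' => ?_
  have := h (k + 1)
  rw [upCount_succ, upCount_succ, h k, List.getElem?_eq_getElem hk,
    List.getElem?_eq_getElem hk'] at this
  rcases w[k].dichotomy with hU | hD <;> rcases w'[k].dichotomy with hU' | hD' <;>
    simp_all

lemma count_U_add_count_D (w : List DyckStep) : w.count U + w.count D = w.length := by
  induction w with
  | nil => rfl
  | cons s w ih => cases s <;> simp <;> omega

lemma upCount_length (p : DyckWord) : upCount p.toList p.toList.length = p.semilength := by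
  rw [upCount, List.take_length]; rfl

lemma le_two_mul_upCount (p : DyckWord) {k : ℕ} (hk : k ≤ p.toList.length) :
    k ≤ 2 * upCount p.toList k := by
  have hD := p.count_D_le_count_U k
  have hUD := count_U_add_count_D (p.toList.take k)
  rw [List.length_take, min_eq_left hk] at hUD
  rw [upCount]
  omega

lemma upCount_map_range (S : Finset ℕ) {N : ℕ} (hS : S ⊆ range N) (m : ℕ) :
    upCount ((List.range N).map fun k => if k ∈ S then U else D) m = #{k ∈ S | k < m} := by
  have hpred : ((· == U) ∘ fun k => if k ∈ S then U else D) = fun k => decide (k ∈ S) := by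
    funext k
    by_cases hk : k ∈ S <;> simp [hk]
  rw [upCount, ← List.map_take, List.take_range, List.count, List.countP_map, hpred,
    ← Nat.count.eq_def, Nat.count_eq_card_filter_range]
  congr 1
  ext k
  simp only [mem_filter, mem_range]
  constructor
  · rintro ⟨hk, hkS⟩
    exact ⟨hkS, by omega⟩
  · rintro ⟨hkS, hk⟩
    exact ⟨lt_min hk (mem_range.1 (hS hkS)), hkS⟩

lemma sub_upCount_mono (w : List DyckStep) : Monotone fun k => k - upCount w k :=
  monotone_nat_of_le_succ fun k => by have := upCount_succ_le w k; omega

end Dyck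

structure FitsSquare (ℓ : ℕ) (d : ℕ → ℕ) : Prop where
  antitone : Antitone d
  le : ∀ i, d i ≤ ℓ
  eq_zero : ∀ i, ℓ ≤ i → d i = 0

/-- `d` is a partition `λ` with `(ℓ, ℓ - 1, …, 1) ⊆ λ ⊆ (ℓ^ℓ)`. -/
structure CoversStaircase (ℓ : ℕ) (d : ℕ → ℕ) : Prop extends FitsSquare ℓ d where
  le_add : ∀ i < ℓ, ℓ ≤ d i + i

section StaircaseDyck

open DyckStep

variable {ℓ : ℕ} {d d' : ℕ → ℕ}

/-- The position of the `i`-th up step (counting from `0`) in the Dyck word of `d`: it is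
preceded by `ℓ - d i` down steps. -/
def upPos (ℓ : ℕ) (d : ℕ → ℕ) (i : ℕ) : ℕ := i + (ℓ - d i)

lemma upPos_strictMono (hd : Antitone d) : StrictMono (upPos ℓ d) := fun i j hij => by
  have := hd hij.le
  unfold upPos
  omega

def word (ℓ : ℕ) (d : ℕ → ℕ) : List DyckStep :=
  (List.range (2 * ℓ)).map fun k => if k ∈ (range ℓ).image (upPos ℓ d) then U else D

lemma length_word (ℓ : ℕ) (d : ℕ → ℕ) : (word ℓ d).length = 2 * ℓ := by
  simp [word]

lemma upCount_word (hd : Antitone d) (m : ℕ) :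
    upCount (word ℓ d) m = #{i ∈ range ℓ | upPos ℓ d i < m} := by
  have hsub : (range ℓ).image (upPos ℓ d) ⊆ range (2 * ℓ) := by
    intro k hk
    obtain ⟨i, hi, rfl⟩ := mem_image.1 hk
    rw [mem_range] at hi ⊢
    unfold upPos
    omega
  rw [word, upCount_map_range _ hsub, filter_image,
    card_image_of_injective _ (upPos_strictMono hd).injective]

lemma lt_upCount_word_iff (hd : Antitone d) {i : ℕ} (hi : i < ℓ) (m : ℕ) :
    i < upCount (word ℓ d) m ↔ upPos ℓ d i < m := by
  rw [upCount_word hd]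
  exact (mem_iff_lt_card_filter
    (fun j k hjk _ hk => ((upPos_strictMono hd).monotone hjk).trans_lt hk) hi).symm

lemma upCount_word_two_mul (hd : FitsSquare ℓ d) : upCount (word ℓ d) (2 * ℓ) = ℓ := by
  rw [upCount_word hd.antitone, filter_true_of_mem, card_range]
  intro i hi
  have := hd.le i
  rw [mem_range] at hi
  unfold upPos
  omega

def toDyckWord (hd : CoversStaircase ℓ d) : DyckWord where
  toList := word ℓ d
  count_U_eq_count_D := by
    have hU := upCount_word_two_mul hd.toFitsSquare
    have hUD := count_U_add_count_D (word ℓ d)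
    rw [upCount, ← length_word ℓ d, List.take_length] at hU
    rw [length_word] at hUD
    omega
  count_D_le_count_U m := by
    have hUD := count_U_add_count_D ((word ℓ d).take m)
    rw [List.length_take, length_word] at hUD
    change upCount (word ℓ d) m + _ = _ at hUD
    change _ ≤ upCount (word ℓ d) m
    suffices min m (2 * ℓ) ≤ 2 * upCount (word ℓ d) m by omega
    set a := upCount (word ℓ d) m
    rcases Nat.lt_or_ge a ℓ with ha | ha
    · have hma : m ≤ upPos ℓ d a :=
        not_lt.1 fun h => lt_irrefl a ((lt_upCount_word_iff hd.antitone ha m).2 h)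
      have := hd.le_add a ha
      unfold upPos at hma
      omega
    · omega

lemma semilength_toDyckWord (hd : CoversStaircase ℓ d) : (toDyckWord hd).semilength = ℓ := by
  have hU := upCount_word_two_mul hd.toFitsSquare
  rwa [upCount, ← length_word ℓ d, List.take_length] at hU

lemma eq_of_word_eq (hd : FitsSquare ℓ d) (hd' : FitsSquare ℓ d')
    (h : word ℓ d = word ℓ d') : d = d' := by
  funext i
  rcases Nat.lt_or_ge i ℓ with hi | hi
  · have hpos : upPos ℓ d i = upPos ℓ d' i := eq_of_forall_gt_iff fun m => by
      rw [← lt_upCount_word_iff hd.antitone hi, ← lt_upCount_word_iff hd'.antitone hi, h]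
    have := hd.le i
    have := hd'.le i
    unfold upPos at hpos
    omega
  · rw [hd.eq_zero i hi, hd'.eq_zero i hi]

/-- The position of the `i`-th up step of `p`: the steps before it are those `k` whose prefix up
to and including `k` has at most `i` up steps. -/
def upPosOf (p : DyckWord) (i : ℕ) : ℕ :=
  #{k ∈ range p.toList.length | upCount p.toList (k + 1) ≤ i}

def ofDyckWord (p : DyckWord) (i : ℕ) : ℕ :=
  if i < p.semilength then p.semilength + i - upPosOf p i else 0

variable (p : DyckWord) {i : ℕ}

lemma upPosOf_lt_iff (hi : i < p.semilength) (m : ℕ) :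
    upPosOf p i < m ↔ i < upCount p.toList m := by
  have hlt : ∀ k < p.toList.length, k < upPosOf p i ↔ upCount p.toList (k + 1) ≤ i :=
    fun k hk => (mem_iff_lt_card_filter
      (fun j k hjk _ hk => (upCount_mono _ (by omega : j + 1 ≤ k + 1)).trans hk) hk).symm
  have hle : upPosOf p i ≤ p.toList.length := (card_filter_le _ _).trans (card_range _).le
  rcases m with _ | m
  · simp [upCount]
  rcases Nat.lt_or_ge m p.toList.length with hm | hm
  · have := hlt m hm
    omega
  · have := upCount_mono p.toList (by omega : p.toList.length ≤ m + 1)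
    rw [upCount_length] at this
    omega

lemma upCount_upPosOf (hi : i < p.semilength) : upCount p.toList (upPosOf p i) = i := by
  have h1 := (upPosOf_lt_iff p hi (upPosOf p i)).not.1 (lt_irrefl _)
  have h2 := (upPosOf_lt_iff p hi (upPosOf p i + 1)).1 (Nat.lt_succ_self _)
  have := upCount_succ_le p.toList (upPosOf p i)
  omega

lemma upPosOf_mono : Monotone (upPosOf p) := fun _ _ hij =>
  card_le_card fun k hk => by
    rw [mem_filter] at hk ⊢
    exact ⟨hk.1, hk.2.trans hij⟩

lemma le_upPosOf (hi : i < p.semilength) : i ≤ upPosOf p i := by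
  simpa [upCount_upPosOf p hi] using upCount_le p.toList (upPosOf p i)

lemma upPosOf_le_two_mul (hi : i < p.semilength) : upPosOf p i ≤ 2 * i := by
  have hlt : upPosOf p i < p.toList.length := (upPosOf_lt_iff p hi _).2 (by rwa [upCount_length])
  simpa [upCount_upPosOf p hi] using le_two_mul_upCount p hlt.le

lemma coversStaircase_ofDyckWord : CoversStaircase p.semilength (ofDyckWord p) where
  antitone i j hij := by
    unfold ofDyckWord
    split_ifs with hj hi hi
    · have := sub_upCount_mono p.toList (upPosOf_mono p hij)
      simp only [upCount_upPosOf p hi, upCount_upPosOf p hj] at this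
      have := le_upPosOf p hi
      have := le_upPosOf p hj
      omega
    all_goals omega
  le i := by
    unfold ofDyckWord
    split_ifs with hi
    · have := le_upPosOf p hi
      omega
    · omega
  eq_zero i hi := if_neg (by omega)
  le_add i hi := by
    have := upPosOf_le_two_mul p hi
    rw [ofDyckWord, if_pos hi]
    omega

lemma toDyckWord_ofDyckWord : toDyckWord (coversStaircase_ofDyckWord p) = p := by
  refine DyckWord.ext (eq_of_upCount_eq (by simp [toDyckWord, length_word]) fun m => ?_)
  have hupPos : ∀ i < p.semilength,
      upPos p.semilength (ofDyckWord p) i < m ↔ i < upCount p.toList m := fun i hi => by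
    have := le_upPosOf p hi
    have := upPosOf_le_two_mul p hi
    rw [← upPosOf_lt_iff p hi, upPos, ofDyckWord, if_pos hi]
    omega
  have hm : upCount p.toList m ≤ p.semilength := (List.take_sublist m p.toList).count_le U
  change upCount (word _ _) m = _
  rw [upCount_word (coversStaircase_ofDyckWord p).antitone, ← card_range (upCount p.toList m)]
  congr 1
  ext i
  simp only [mem_filter, mem_range]
  constructor
  · rintro ⟨hi, h⟩
    exact (hupPos i hi).1 h
  · intro h
    exact ⟨by omega, (hupPos i (by omega)).2 h⟩

theorem ncard_coversStaircase (ℓ : ℕ) : {d | CoversStaircase ℓ d}.ncard = catalan ℓ := by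
  rw [← DyckWord.card_dyckWord_semilength_eq_catalan, ← Nat.card_eq_fintype_card]
  refine (Set.ncard_congr (fun d hd => toDyckWord hd) (fun d hd => semilength_toDyckWord hd)
    (fun d d' hd hd' h =>
      eq_of_word_eq hd.toFitsSquare hd'.toFitsSquare (congrArg DyckWord.toList h))
    ?_).trans (Nat.card_coe_set_eq _).symm
  rintro p rfl
  exact ⟨_, coversStaircase_ofDyckWord p, toDyckWord_ofDyckWord p⟩

end StaircaseDyck

variable {n ℓ c : ℕ} {d d' : ℕ → ℕ}

lemma finite_boxes {y : ℕ → ℤ} (hy : IsEYD0 y) (c : ℕ) : {p : ℕ × ℤ |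
    y p.1 ≤ p.2 ∧ p.2 ≤ -1 ∧ ((p.1 : ℤ) + p.2 + 1) % (n : ℤ) = (c : ℤ)}.Finite := by
  obtain ⟨hmono, -, N, hN⟩ := hy
  refine ((range N ×ˢ Icc (y 0) (-1)).finite_toSet).subset fun p ⟨h1, h2, _⟩ => ?_
  have hp : p.1 < N := by
    by_contra h
    have := hN p.1 (by omega)
    omega
  simpa [hp, h2] using (hmono (Nat.zero_le p.1)).trans h1

lemma emod_ne_of_colorCount_eq_zero {y : ℕ → ℤ} (hy : IsEYD0 y) (h : colorCount n y c = 0)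
    {i : ℕ} {b : ℤ} (hb : y i ≤ b) (hb' : b ≤ -1) : ((i : ℤ) + b + 1) % n ≠ c := fun hc => by
  rw [colorCount, Set.ncard_eq_zero (finite_boxes hy c)] at h
  exact Set.eq_empty_iff_forall_notMem.1 h (i, b) ⟨hb, hb', hc⟩

def toDiagram (d : ℕ → ℕ) : ℕ → ℤ := fun i => -(d i : ℤ)

lemma exists_fitsSquare {y : ℕ → ℤ} (hy : IsEYD0 y) (hℓ : 1 ≤ ℓ) (hℓn : 2 * ℓ ≤ n)
    (h₁ : colorCount n y ℓ = 0) (h₂ : colorCount n y (n - ℓ) = 0) :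
    ∃ d, FitsSquare ℓ d ∧ y = toDiagram d := by
  have hzero : ∀ i, ℓ ≤ i → y i = 0 := fun i hi => by
    by_contra hne
    have hyℓ : y ℓ ≤ -1 := (hy.1 hi).trans (by have := hy.2.1 i; omega)
    refine emod_ne_of_colorCount_eq_zero hy h₁ hyℓ le_rfl ?_
    rw [show (ℓ : ℤ) + -1 + 1 = ℓ by ring]
    exact Int.emod_eq_of_lt (by omega) (by omega)
  have hbound : ∀ i, -(ℓ : ℤ) ≤ y i := fun i => by
    by_contra hlt
    have hy0 : y 0 ≤ -ℓ - 1 := (hy.1 (Nat.zero_le i)).trans (by omega)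
    refine emod_ne_of_colorCount_eq_zero hy h₂ hy0 (by omega) ?_
    rw [← Int.add_emod_right, Int.emod_eq_of_lt (by omega) (by omega)]
    omega
  refine ⟨fun i => (-y i).toNat, ⟨fun i j hij => ?_, fun i => ?_, fun i hi => ?_⟩,
    funext fun i => ?_⟩
  · have := hy.1 hij
    omega
  · have := hbound i
    omega
  · have := hzero i hi
    omega
  · have := hy.2.1 i
    simp only [toDiagram]
    omega

/-- The lines `i < ℓ` in which `d` has a box of content `t`, namely the box `(i, t - i - 1)`. -/
def diagonal (ℓ : ℕ) (d : ℕ → ℕ) (t : ℤ) : Finset ℕ :=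
  {i ∈ range ℓ | t ≤ i ∧ (i : ℤ) + 1 ≤ d i + t}

lemma mem_diagonal {t : ℤ} {i : ℕ} :
    i ∈ diagonal ℓ d t ↔ i < ℓ ∧ t ≤ i ∧ (i : ℤ) + 1 ≤ d i + t := by
  simp [diagonal]

/-- When `2ℓ ≤ n`, the contents `-ℓ < t < ℓ` of the boxes of the `ℓ × ℓ` square have distinct
colors mod `n`; this is the one of color `c`, or a value outside that window if `ℓ ≤ c ≤ n - ℓ`. -/
def contentOfColor (n ℓ c : ℕ) : ℤ := if c < ℓ then c else (c : ℤ) - n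

lemma emod_eq_iff_eq_contentOfColor (hℓn : 2 * ℓ ≤ n) (hc : c < n) {t : ℤ}
    (ht : -(ℓ : ℤ) < t) (ht' : t < ℓ) : t % n = c ↔ t = contentOfColor n ℓ c := by
  have hmod : t % n = if 0 ≤ t then t else t + n := by
    split_ifs with h
    · exact Int.emod_eq_of_lt h (by omega)
    · rw [← Int.add_emod_right, Int.emod_eq_of_lt (by omega) (by omega)]
  rw [hmod, contentOfColor]
  split_ifs <;> omega

lemma colorCount_toDiagram (hd : FitsSquare ℓ d) (hℓn : 2 * ℓ ≤ n) (hc : c < n) :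
    colorCount n (toDiagram d) c = #(diagonal ℓ d (contentOfColor n ℓ c)) := by
  set t := contentOfColor n ℓ c
  have hboxes : {p : ℕ × ℤ | toDiagram d p.1 ≤ p.2 ∧ p.2 ≤ -1 ∧
      ((p.1 : ℤ) + p.2 + 1) % (n : ℤ) = (c : ℤ)} =
      (fun i : ℕ => ((i, t - i - 1) : ℕ × ℤ)) '' ↑(diagonal ℓ d t) := by
    ext ⟨i, b⟩
    simp only [toDiagram, Set.mem_ofPred_eq, Set.mem_image, mem_coe, mem_diagonal,
      Prod.mk.injEq]
    have hdi := hd.le i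
    constructor
    · rintro ⟨hb, hb', hcol⟩
      have hi : i < ℓ := by
        by_contra h
        have := hd.eq_zero i (by omega)
        omega
      rw [emod_eq_iff_eq_contentOfColor hℓn hc (by omega) (by omega)] at hcol
      exact ⟨i, ⟨hi, by omega, by omega⟩, rfl, by omega⟩
    · rintro ⟨i, ⟨hi, hti, hdt⟩, rfl, rfl⟩
      refine ⟨by omega, by omega, ?_⟩
      rw [emod_eq_iff_eq_contentOfColor hℓn hc (by omega) (by omega)]
      ring
  rw [colorCount, hboxes, Set.ncard_image_of_injective _ fun i j h => (Prod.mk.inj h).1,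
    Set.ncard_coe_finset]

lemma diagonal_eq_empty (hd : FitsSquare ℓ d) {t : ℤ} (ht : ℓ ≤ t.natAbs) :
    diagonal ℓ d t = ∅ := by
  refine eq_empty_of_forall_notMem fun i hi => ?_
  have := hd.le i
  rw [mem_diagonal] at hi
  omega

/-- `ℓ - |t|` is the number of boxes of content `t` in the `ℓ × ℓ` square. -/
def Complementary (ℓ : ℕ) (d d' : ℕ → ℕ) : Prop :=
  ∀ t : ℤ, #(diagonal ℓ d t) + #(diagonal ℓ d' t) = ℓ - t.natAbs

lemma weightCond_iff {Y : ℕ → ℕ → ℤ} (hd : FitsSquare ℓ d) (hd' : FitsSquare ℓ d')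
    (hℓn : 2 * ℓ ≤ n) (hY₁ : Y 1 = toDiagram d) (hY₂ : Y 2 = toDiagram d') :
    WeightCond n 2 ℓ Y ↔ Complementary ℓ d d' := by
  have htarget : ∀ c < n, (if c = 0 then ℓ else if c ≤ ℓ - 1 then ℓ - c
      else if n - ℓ + 1 ≤ c then ℓ - (n - c) else 0) = ℓ - (contentOfColor n ℓ c).natAbs := by
    intro c hc
    unfold contentOfColor
    split_ifs <;> omega
  have hsum : ∀ c < n, ∑ j ∈ Icc 1 2, colorCount n (Y j) c =
      #(diagonal ℓ d (contentOfColor n ℓ c)) + #(diagonal ℓ d' (contentOfColor n ℓ c)) := by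
    intro c hc
    rw [show ∑ j ∈ Icc 1 2, colorCount n (Y j) c = colorCount n (Y 1) c + colorCount n (Y 2) c
      from rfl, hY₁, hY₂, colorCount_toDiagram hd hℓn hc, colorCount_toDiagram hd' hℓn hc]
  constructor
  · intro hw t
    rcases le_or_gt ℓ t.natAbs with ht | ht
    · rw [diagonal_eq_empty hd ht, diagonal_eq_empty hd' ht]
      simp only [card_empty]
      omega
    · have hn : (0 : ℤ) < n := by omega
      have := Int.emod_nonneg t hn.ne'
      have := Int.emod_lt_of_pos t hn
      have hc : (t % n).toNat < n := by omega
      have htc : t = contentOfColor n ℓ (t % n).toNat :=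
        (emod_eq_iff_eq_contentOfColor hℓn hc (by omega) (by omega)).1 (by omega)
      rw [htc, ← hsum _ hc, hw _ hc, htarget _ hc]
  · intro h c hc
    rw [hsum c hc, htarget c hc]
    exact h _

/-- The conjugate of the complement of `d` in the `ℓ × ℓ` square, rotated by a half turn. -/
def dual (ℓ : ℕ) (d : ℕ → ℕ) (i : ℕ) : ℕ := #{j ∈ range ℓ | d (ℓ - 1 - j) + i < ℓ}

lemma le_dual_iff (hd : Antitone d) {i k : ℕ} (hk : 1 ≤ k) (hkℓ : k ≤ ℓ) :
    k ≤ dual ℓ d i ↔ d (ℓ - k) + i < ℓ := by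
  have h := mem_iff_lt_card_filter (P := fun j => d (ℓ - 1 - j) + i < ℓ) (m := ℓ)
    (fun j j' _ _ h =>
      (Nat.add_le_add_right (hd (by omega : ℓ - 1 - j' ≤ ℓ - 1 - j)) i).trans_lt h)
    (by omega : k - 1 < ℓ)
  rw [show ℓ - 1 - (k - 1) = ℓ - k by omega] at h
  rw [dual, h]
  omega

lemma fitsSquare_dual (ℓ : ℕ) (d : ℕ → ℕ) : FitsSquare ℓ (dual ℓ d) where
  antitone i i' hii' := card_le_card fun j hj => by
    rw [mem_filter] at hj ⊢
    exact ⟨hj.1, by omega⟩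
  le i := (card_filter_le _ _).trans (card_range ℓ).le
  eq_zero i hi := card_eq_zero.2 (filter_eq_empty_iff.2 fun j _ => by omega)

lemma dual_le_iff (hd : FitsSquare ℓ d) :
    (∀ i, dual ℓ d i ≤ d i) ↔ ∀ i < ℓ, ℓ ≤ d i + i := by
  constructor
  · intro h i hi
    by_contra hlt
    have := (le_dual_iff (ℓ := ℓ) (i := i) hd.antitone (k := ℓ - i) (by omega) (by omega)).2
      (by rw [show ℓ - (ℓ - i) = i by omega]; omega)
    have := h i
    omega
  · intro h i
    rcases Nat.lt_or_ge i ℓ with hi | hi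
    · by_contra hlt
      have := h i hi
      have := (le_dual_iff (ℓ := ℓ) hd.antitone (i := i) (k := dual ℓ d i) (by omega)
        ((fitsSquare_dual ℓ d).le i)).1 le_rfl
      have := hd.antitone (show ℓ - dual ℓ d i ≤ i by omega)
      omega
    · rw [(fitsSquare_dual ℓ d).eq_zero i hi]
      exact Nat.zero_le _

lemma card_diagonal_const (ℓ : ℕ) (t : ℤ) : #(diagonal ℓ (fun _ => ℓ) t) = ℓ - t.natAbs := by
  rw [show diagonal ℓ (fun _ => ℓ) t = Ico t.toNat (min (ℓ + t).toNat ℓ) by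
    ext i
    rw [mem_diagonal, mem_Ico]
    omega, Nat.card_Ico]
  omega

lemma diagonal_subset (hd : FitsSquare ℓ d) {t : ℤ} :
    diagonal ℓ d t ⊆ diagonal ℓ (fun _ => ℓ) t := fun i hi => by
  have := hd.le i
  rw [mem_diagonal] at hi ⊢
  omega

lemma complementary_dual (hd : FitsSquare ℓ d) : Complementary ℓ d (dual ℓ d) := by
  intro t
  set D := diagonal ℓ (fun _ => ℓ) t
  set A := diagonal ℓ d t
  have hAD : A ⊆ D := diagonal_subset hd
  have hBD : diagonal ℓ (dual ℓ d) t ⊆ D := diagonal_subset (fitsSquare_dual ℓ d)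
  -- The half turn of the square restricts to the involution `ρ` of the diagonal `D`, which
  -- exchanges the lines of `dual ℓ d` on `D` with those of `D` missing from `d`.
  obtain ⟨ρ, hρ_def⟩ : ∃ ρ : ℕ → ℕ, ∀ i, ρ i = ((ℓ : ℤ) - 1 + t - i).toNat :=
    ⟨_, fun _ => rfl⟩
  have hρ : ∀ i ∈ D, ρ i ∈ D ∧ ρ (ρ i) = i ∧ ((ρ i : ℕ) : ℤ) = ℓ - 1 + t - i := fun i hi => by
    rw [mem_diagonal] at hi ⊢
    rw [hρ_def (ρ i), hρ_def i]
    omega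
  have hdual : ∀ i ∈ D, i ∈ diagonal ℓ (dual ℓ d) t ↔ ρ i ∉ A := fun i hi => by
    obtain ⟨-, -, hρi⟩ := hρ i hi
    rw [mem_diagonal] at hi
    have hk := le_dual_iff (ℓ := ℓ) hd.antitone (i := i) (k := (i + 1 - t).toNat)
      (by omega) (by omega)
    rw [show ℓ - (i + 1 - t).toNat = ρ i by omega] at hk
    rw [mem_diagonal, mem_diagonal]
    constructor
    · intro h
      have := hk.1 (by omega)
      omega
    · intro h
      have := hk.2 (by omega)
      omega
  have hcard : #(diagonal ℓ (dual ℓ d) t) = #(D \ A) := by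
    refine card_nbij' ρ ρ (fun i hi => ?_) (fun i hi => ?_) (fun i hi => (hρ i (hBD hi)).2.1)
      (fun i hi => (hρ i (mem_sdiff.1 hi).1).2.1)
    · exact mem_sdiff.2 ⟨(hρ i (hBD hi)).1, (hdual i (hBD hi)).1 hi⟩
    · obtain ⟨hiD, hiA⟩ := mem_sdiff.1 hi
      obtain ⟨hρD, hρρ, -⟩ := hρ i hiD
      rw [mem_coe, hdual _ hρD, hρρ]
      exact hiA
  have := card_le_card hAD
  rw [hcard, card_sdiff_of_subset hAD, card_diagonal_const]
  rw [card_diagonal_const] at this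
  omega

lemma mem_diagonal_iff_lt (hd : Antitone d) {t : ℤ} {i : ℕ} (ht : t ≤ i) (hi : i < ℓ) :
    i ∈ diagonal ℓ d t ↔ i < t.toNat + #(diagonal ℓ d t) := by
  rw [diagonal, mem_filter, mem_range, and_iff_right hi]
  exact mem_iff_lt_add_card_filter (P := fun j : ℕ => t ≤ j ∧ (j : ℤ) + 1 ≤ d j + t)
    (fun j hj h => by omega)
    (fun j k hj hjk _ h => ⟨by omega, by have := hd hjk; omega⟩) (by omega) hi

lemma eq_of_card_diagonal_eq (hd : FitsSquare ℓ d) (hd' : FitsSquare ℓ d')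
    (h : ∀ t, #(diagonal ℓ d t) = #(diagonal ℓ d' t)) : d = d' := by
  funext i
  rcases Nat.lt_or_ge i ℓ with hi | hi
  · have key : ∀ k, 1 ≤ k → (k ≤ d i ↔ k ≤ d' i) := fun k hk => by
      have h₁ := mem_diagonal_iff_lt hd.antitone (t := i + 1 - k) (by omega) hi
      have h₂ := mem_diagonal_iff_lt hd'.antitone (t := i + 1 - k) (by omega) hi
      rw [mem_diagonal, h] at h₁
      rw [mem_diagonal] at h₂
      constructor
      · intro hk'
        have := h₂.2 (h₁.1 ⟨hi, by omega, by omega⟩)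
        omega
      · intro hk'
        have := h₁.2 (h₂.1 ⟨hi, by omega, by omega⟩)
        omega
    have h₁ := key (d i + 1) (by omega)
    have h₂ := key (d' i + 1) (by omega)
    omega
  · rw [hd.eq_zero i hi, hd'.eq_zero i hi]

def pairOf (ℓ : ℕ) (d : ℕ → ℕ) : ℕ → ℕ → ℤ := fun j =>
  if j = 1 then toDiagram d else if j = 2 then toDiagram (dual ℓ d) else fun _ => 0

lemma isEYD0_toDiagram (hd : FitsSquare ℓ d) : IsEYD0 (toDiagram d) :=
  ⟨fun i j hij => by have := hd.antitone hij; simp only [toDiagram]; omega,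
    fun i => by simp [toDiagram], ℓ, fun i hi => by simp [toDiagram, hd.eq_zero i hi]⟩

lemma pairOf_mem (hℓ : 1 ≤ ℓ) (hℓn : 2 * ℓ ≤ n) (hd : CoversStaircase ℓ d) :
    MemB n 2 (pairOf ℓ d) ∧ WeightCond n 2 ℓ (pairOf ℓ d) ∧
      ∀ j, j = 0 ∨ 2 < j → pairOf ℓ d j = fun _ => 0 := by
  have hdual := (dual_le_iff hd.toFitsSquare).2 hd.le_add
  refine ⟨⟨fun j hj hj' => ?_, fun j hj hj' i => ?_, fun i => ?_,
      fun i => ⟨2, one_le_two, le_rfl, ?_⟩⟩,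
    (weightCond_iff hd.toFitsSquare (fitsSquare_dual ℓ d) hℓn rfl rfl).2
      (complementary_dual hd.toFitsSquare),
    fun j hj => (if_neg (by omega)).trans (if_neg (by omega))⟩
  · obtain rfl | rfl : j = 1 ∨ j = 2 := by omega
    · exact isEYD0_toDiagram hd.toFitsSquare
    · exact isEYD0_toDiagram (fitsSquare_dual ℓ d)
  · obtain rfl : j = 1 := by omega
    have := hdual i
    simp [pairOf, toDiagram]
    omega
  · have := hd.le i
    simp [pairOf, toDiagram]
    omega
  · have := hd.le i
    simp [pairOf, toDiagram]
    omega

lemma exists_eq_pairOf (hℓ : 1 ≤ ℓ) (hℓn : 2 * ℓ ≤ n) {Y : ℕ → ℕ → ℤ} (hY : MemB n 2 Y)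
    (hw : WeightCond n 2 ℓ Y) (hpin : ∀ j, j = 0 ∨ 2 < j → Y j = fun _ => 0) :
    ∃ d, CoversStaircase ℓ d ∧ pairOf ℓ d = Y := by
  obtain ⟨hE, hle, -, -⟩ := hY
  have h₀ : ∀ c, c = ℓ ∨ c = n - ℓ →
      colorCount n (Y 1) c = 0 ∧ colorCount n (Y 2) c = 0 := by
    intro c hc
    have := hw c (by omega)
    rw [show ∑ j ∈ Icc 1 2, colorCount n (Y j) c = colorCount n (Y 1) c + colorCount n (Y 2) c
      from rfl, if_neg (by omega), if_neg (by omega), if_neg (by omega)] at this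
    omega
  obtain ⟨d, hd, hY₁⟩ := exists_fitsSquare (hE 1 le_rfl one_le_two) hℓ hℓn
    (h₀ ℓ (.inl rfl)).1 (h₀ (n - ℓ) (.inr rfl)).1
  obtain ⟨d', hd', hY₂⟩ := exists_fitsSquare (hE 2 one_le_two le_rfl) hℓ hℓn
    (h₀ ℓ (.inl rfl)).2 (h₀ (n - ℓ) (.inr rfl)).2
  have hcompl := (weightCond_iff hd hd' hℓn hY₁ hY₂).1 hw
  obtain rfl : d' = dual ℓ d := eq_of_card_diagonal_eq hd' (fitsSquare_dual ℓ d) fun t => by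
    have := hcompl t
    have := complementary_dual hd t
    omega
  have hstair := (dual_le_iff hd).1 fun i => by
    have := hle 1 le_rfl one_lt_two i
    simp only [hY₁, hY₂, toDiagram] at this
    omega
  refine ⟨d, ⟨hd, hstair⟩, funext fun j => ?_⟩
  unfold pairOf
  split_ifs with h₁ h₂
  · rw [h₁, hY₁]
  · rw [h₂, hY₂]
  · exact (hpin j (by omega)).symm

lemma pairOf_injective : Function.Injective (pairOf ℓ) := fun d d' h => funext fun i => by
  simpa [pairOf, toDiagram] using congrFun (congrFun h 1) i

lemma setOf_eq_image_pairOf (hℓ : 1 ≤ ℓ) (hℓn : 2 * ℓ ≤ n) :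
    {Y : ℕ → ℕ → ℤ | MemB n 2 Y ∧ WeightCond n 2 ℓ Y ∧ ∀ j, j = 0 ∨ 2 < j → Y j = fun _ => 0} =
      pairOf ℓ '' {d | CoversStaircase ℓ d} := by
  ext Y
  constructor
  · rintro ⟨hY, hw, hpin⟩
    exact exists_eq_pairOf hℓ hℓn hY hw hpin
  · rintro ⟨d, hd, rfl⟩
    exact pairOf_mem hℓ hℓn hd

end CrystalCatalan

open CrystalCatalan in
theorem stmt_15_general (n ℓ : ℕ) (hℓ1 : 1 ≤ ℓ) (hℓ2 : ℓ ≤ n / 2) :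
    Set.ncard {Y : ℕ → ℕ → ℤ |
        MemB n 2 Y ∧ WeightCond n 2 ℓ Y ∧ ∀ j, j = 0 ∨ 2 < j → Y j = fun _ => 0} =
      Nat.choose (2 * ℓ) ℓ / (ℓ + 1) := by
  rw [setOf_eq_image_pairOf hℓ1 (by omega), Set.ncard_image_of_injective _ pairOf_injective,
    ncard_coversStaircase, catalan_eq_centralBinom_div, Nat.centralBinom]

/-- Tsuchioka's Catalan-number result, recovered by Jayne–Misra: the multiplicity of
the maximal dominant weight `2Λ_0 - γ_ℓ` of `V(2Λ_0)`, i.e. the number of pairs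
`(Y_1, Y_2) ∈ B(2Λ_0)` with the corresponding box-color counts, is the `ℓ`-th
Catalan number `C(2ℓ, ℓ)/(ℓ+1)`.
(Pairs of diagrams are encoded as functions pinned to a constant value outside
their index range `{1, 2}`.) -/
theorem stmt_15 (n ℓ : ℕ) (hn : 2 ≤ n) (hℓ1 : 1 ≤ ℓ) (hℓ2 : ℓ ≤ n / 2) :
    Set.ncard {Y : ℕ → ℕ → ℤ |
        MemB n 2 Y ∧ WeightCond n 2 ℓ Y ∧ ∀ j, j = 0 ∨ 2 < j → Y j = fun _ => 0} =
      Nat.choose (2 * ℓ) ℓ / (ℓ + 1) :=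
  stmt_15_general n ℓ hℓ1 hℓ2
end
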